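/- arXiv:math/0305091 — 6 statements merged into one kernel-verified Lean document; each statement's English description precedes it below -/
import Mathlib

section
/- Let g : (t₀,∞) × (0,∞) → ℝ be nondecreasing in the second variable with S := sup_{t>t₀, h,k>0} |g(t,h+k) − g(t+h,k) − g(t,h)| < ∞. Then the limit lim_{h→∞} liminf_{t→∞} g(t,h)/h exists (possibly infinite). Moreover, for every r > 0, liminf_{s→∞} ḡ(s)/s ≥ ḡ(r)/r − S/r, where ḡ(h) = liminf_{t→∞} g(t,h). -/
/-! With ḡ = `timeLiminf g`: ḡ is nondecreasing, and since shifting time does not change a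
liminf at infinity, it is superadditive up to the defect `S`: ḡ(h) + ḡ(k) - S ≤ ḡ(h + k).
Iterating, ḡ(n r) ≥ n (ḡ(r) - S) + S, and monotonicity with n = ⌊s / r⌋ gives the Fekete-type
bound liminf ḡ(s)/s ≥ (ḡ(r) - S)/r. Read as ḡ(r)/r ≤ liminf ḡ(s)/s + S/r, it bounds the limsup
of ḡ(r)/r by the liminf, so the limit exists. -/

open Filter Topology

lemma liminf_comp_add_const {α : Type*} [ConditionallyCompleteLattice α] (u : ℝ → α) (h : ℝ) :
    liminf (fun t => u (t + h)) atTop = liminf u atTop := by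
  rw [← Function.comp_def, liminf_comp, map_add_atTop_eq]

lemma tendsto_of_le_liminf_add {α : Type*} {l : Filter α} [l.NeBot] {ψ : α → EReal} {ε : α → ℝ}
    (hε : Tendsto ε l (𝓝 0)) (h : ∀ᶠ x in l, ψ x ≤ liminf ψ l + ε x) :
    Tendsto ψ l (𝓝 (liminf ψ l)) := by
  have hlim : Tendsto (fun x => liminf ψ l + ε x) l (𝓝 (liminf ψ l)) := by
    show Tendsto ((fun p : EReal × EReal => p.1 + p.2) ∘ fun x => (liminf ψ l, (ε x : EReal))) l _
    have hcont := EReal.continuousAt_add (p := (liminf ψ l, 0)) (by simp) (by simp)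
    simpa using hcont.tendsto.comp
      (tendsto_const_nhds.prodMk_nhds ((continuous_coe_real_ereal.tendsto 0).comp hε))
  refine tendsto_of_liminf_eq_limsup rfl (le_antisymm ?_ liminf_le_limsup)
  calc limsup ψ l ≤ limsup (fun x => liminf ψ l + ε x) l := limsup_le_limsup h
    _ = liminf ψ l := hlim.limsup_eq

lemma tendsto_nat_floor_div_mul_add_div {r : ℝ} (hr : 0 < r) (c S : ℝ) :
    Tendsto (fun s : ℝ => (⌊s / r⌋₊ * c + S) / s) atTop (𝓝 (c / r)) := by
  have hfloor : Tendsto (fun s : ℝ => (⌊s / r⌋₊ : ℝ) / (s / r)) atTop (𝓝 1) :=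
    tendsto_nat_floor_div_atTop.comp (tendsto_id.atTop_div_const hr)
  have hS : Tendsto (fun s : ℝ => S / s) atTop (𝓝 0) := tendsto_const_nhds.div_atTop tendsto_id
  have := (hfloor.mul_const (c / r)).add hS
  rw [one_mul, add_zero] at this
  refine this.congr' ?_
  filter_upwards [eventually_gt_atTop 0] with s hs
  field_simp

section AlmostSuperadditive

variable {φ : ℝ → EReal} {S : ℝ}

lemma le_apply_nat_mul_of_le (hsuper : ∀ h > 0, ∀ k > 0, φ h + φ k - S ≤ φ (h + k))
    {r a : ℝ} (hr : 0 < r) (ha : (a : EReal) ≤ φ r) {n : ℕ} (hn : 0 < n) :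
    ((n * (a - S) + S : ℝ) : EReal) ≤ φ (n * r) := by
  induction n, hn using Nat.le_induction with
  | base => simpa using ha
  | succ n hn ih =>
    calc (((n + 1 : ℕ) * (a - S) + S : ℝ) : EReal)
        = ((n * (a - S) + S : ℝ) : EReal) + a - S := by
          rw [← EReal.coe_add, ← EReal.coe_sub]; congr 1; push_cast; ring
      _ ≤ φ (n * r) + φ r - S := EReal.sub_le_sub (add_le_add ih ha) le_rfl
      _ ≤ φ (n * r + r) := hsuper _ (by positivity) _ hr
      _ = φ ((n + 1 : ℕ) * r) := by congr 1; push_cast; ring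

variable (hmono : MonotoneOn φ (Set.Ioi 0)) (hsuper : ∀ h > 0, ∀ k > 0, φ h + φ k - S ≤ φ (h + k))
include hmono hsuper

lemma coe_sub_div_le_liminf {r a : ℝ} (hr : 0 < r) (ha : (a : EReal) ≤ φ r) :
    (((a - S) / r : ℝ) : EReal) ≤ liminf (fun s => φ s * (s⁻¹ : ℝ)) atTop := by
  have hlim := (continuous_coe_real_ereal.tendsto _).comp
    (tendsto_nat_floor_div_mul_add_div hr (a - S) S)
  rw [← hlim.liminf_eq]
  refine liminf_le_liminf ?_
  filter_upwards [eventually_ge_atTop r] with s hs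
  have hs0 : 0 < s := hr.trans_le hs
  have hn : 0 < ⌊s / r⌋₊ := Nat.floor_pos.2 ((one_le_div hr).2 hs)
  have hnr : ⌊s / r⌋₊ * r ≤ s := (le_div_iff₀ hr).1 (Nat.floor_le (by positivity))
  calc ((((⌊s / r⌋₊ * (a - S) + S) / s : ℝ)) : EReal)
      = ((⌊s / r⌋₊ * (a - S) + S : ℝ) : EReal) * (s⁻¹ : ℝ) := by
        rw [div_eq_mul_inv, EReal.coe_mul]
    _ ≤ φ (⌊s / r⌋₊ * r) * (s⁻¹ : ℝ) := by
        gcongr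
        exact le_apply_nat_mul_of_le hsuper hr ha hn
    _ ≤ φ s * (s⁻¹ : ℝ) := by
        gcongr
        exact hmono (mul_pos (Nat.cast_pos.2 hn) hr) hs0 hnr

lemma mul_inv_sub_div_le_liminf {r : ℝ} (hr : 0 < r) :
    φ r * (r⁻¹ : ℝ) - (S / r : ℝ) ≤ liminf (fun s => φ s * (s⁻¹ : ℝ)) atTop := by
  induction hφr : φ r using EReal.rec with
  | bot => simp [EReal.bot_mul_coe_of_pos (inv_pos.2 hr)]
  | top =>
    suffices liminf (fun s => φ s * (s⁻¹ : ℝ)) atTop = ⊤ by simp [this]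
    refine (EReal.eq_top_iff_forall_lt _).2 fun y => ?_
    calc (y : EReal) < (y + 1 : ℝ) := by exact_mod_cast lt_add_one y
      _ = (((((y + 1) * r + S) - S) / r : ℝ) : EReal) := by congr 1; field_simp; ring
      _ ≤ _ := coe_sub_div_le_liminf hmono hsuper hr (by simp [hφr])
  | coe a =>
    calc (a : EReal) * (r⁻¹ : ℝ) - (S / r : ℝ) = (((a - S) / r : ℝ) : EReal) := by
          rw [← EReal.coe_mul, ← EReal.coe_sub]; congr 1; ring
      _ ≤ _ := coe_sub_div_le_liminf hmono hsuper hr hφr.ge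

lemma tendsto_mul_inv_liminf :
    Tendsto (fun s => φ s * (s⁻¹ : ℝ)) atTop (𝓝 (liminf (fun s => φ s * (s⁻¹ : ℝ)) atTop)) := by
  refine tendsto_of_le_liminf_add (ε := fun s => S / s) (tendsto_const_nhds.div_atTop tendsto_id) ?_
  filter_upwards [eventually_gt_atTop 0] with s hs
  exact (EReal.sub_le_iff_le_add (by simp) (by simp)).1 (mul_inv_sub_div_le_liminf hmono hsuper hs)

end AlmostSuperadditive

noncomputable def timeLiminf (g : ℝ → ℝ → ℝ) (h : ℝ) : EReal :=
  liminf (fun t => (g t h : EReal)) atTop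

section TimeLiminf

variable {g : ℝ → ℝ → ℝ} {t₀ : ℝ}

lemma monotoneOn_timeLiminf (hmono : ∀ t > t₀, ∀ h₁ h₂ : ℝ, 0 < h₁ → h₁ ≤ h₂ → g t h₁ ≤ g t h₂) :
    MonotoneOn (timeLiminf g) (Set.Ioi 0) := fun h₁ h₁0 h₂ _ h12 =>
  liminf_le_liminf <| (eventually_gt_atTop t₀).mono fun t ht =>
    EReal.coe_le_coe_iff.2 (hmono t ht h₁ h₂ h₁0 h12)

lemma timeLiminf_add_sub_le {S : ℝ} (hS : ∀ t > t₀, ∀ h > (0 : ℝ), ∀ k > (0 : ℝ),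
      |g t (h + k) - g (t + h) k - g t h| ≤ S) :
    ∀ h > 0, ∀ k > 0, timeLiminf g h + timeLiminf g k - S ≤ timeLiminf g (h + k) := by
  intro h hh k hk
  calc timeLiminf g h + timeLiminf g k - S
      = liminf (fun t => (g t h : EReal)) atTop + liminf (fun t => (g (t + h) k : EReal)) atTop
          + liminf (fun _ => ((-S : ℝ) : EReal)) atTop := by
        rw [liminf_const, liminf_comp_add_const (fun t => (g t k : EReal)), sub_eq_add_neg,
          EReal.coe_neg]
        rfl
    _ ≤ liminf (fun t => (g t h : EReal) + g (t + h) k + ((-S : ℝ) : EReal)) atTop :=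
        (add_le_add_left EReal.le_liminf_add _).trans EReal.le_liminf_add
    _ = liminf (fun t => ((g t h + g (t + h) k - S : ℝ) : EReal)) atTop := by
        simp only [sub_eq_add_neg, EReal.coe_add]
    _ ≤ timeLiminf g (h + k) :=
        liminf_le_liminf <| (eventually_gt_atTop t₀).mono fun t ht => by
          have := (abs_le.1 (hS t ht h hh k hk)).1
          exact_mod_cast (by linarith : g t h + g (t + h) k - S ≤ g t (h + k))

lemma liminf_div_eq_timeLiminf_mul_inv {h : ℝ} (hh : 0 < h) :
    liminf (fun t => ((g t h / h : ℝ) : EReal)) atTop = timeLiminf g h * (h⁻¹ : ℝ) := by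
  simp_rw [div_eq_mul_inv, EReal.coe_mul, mul_comm _ ((h⁻¹ : ℝ) : EReal)]
  exact EReal.liminf_const_mul_of_nonneg_of_ne_top (by exact_mod_cast (inv_pos.2 hh).le)
    (EReal.coe_ne_top _)

end TimeLiminf

theorem stmt13 (t₀ S : ℝ) (g : ℝ → ℝ → ℝ)
    (hmono : ∀ t > t₀, ∀ h₁ h₂ : ℝ, 0 < h₁ → h₁ ≤ h₂ → g t h₁ ≤ g t h₂)
    (hS : ∀ t > t₀, ∀ h > (0 : ℝ), ∀ k > (0 : ℝ),
      |g t (h + k) - g (t + h) k - g t h| ≤ S) :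
    (∃ L : EReal, Tendsto (fun h : ℝ =>
        liminf (fun t : ℝ => ((g t h / h : ℝ) : EReal)) atTop) atTop (𝓝 L)) ∧
      ∀ r > (0 : ℝ),
        liminf (fun s : ℝ =>
            liminf (fun t : ℝ => ((g t s : ℝ) : EReal)) atTop * ((s⁻¹ : ℝ) : EReal)) atTop ≥
          liminf (fun t : ℝ => ((g t r : ℝ) : EReal)) atTop * ((r⁻¹ : ℝ) : EReal) -
            ((S / r : ℝ) : EReal) := by
  have hG := monotoneOn_timeLiminf hmono
  have hsuper := timeLiminf_add_sub_le hS
  refine ⟨⟨_, (tendsto_mul_inv_liminf hG hsuper).congr' ?_⟩,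
    fun r hr => mul_inv_sub_div_le_liminf hG hsuper hr⟩
  filter_upwards [eventually_gt_atTop 0] with h hh
  exact (liminf_div_eq_timeLiminf_mul_inv hh).symm
end

section
/- Let g : (t₀,∞) × (0,∞) → ℝ be nondecreasing in the second variable with S := sup_{t>t₀, h,k>0} |g(t,h+k) − g(t+h,k) − g(t,h)| < ∞. Then lim_{t→∞} liminf_{h→∞} g(t,h)/h ≥ lim_{h→∞} liminf_{t→∞} g(t,h)/h and lim_{t→∞} limsup_{h→∞} g(t,h)/h ≤ lim_{h→∞} limsup_{t→∞} g(t,h)/h (where the outer limits on the left can be taken as liminf_{t→∞}, resp. limsup_{t→∞}, if existence of the limit in t is not assumed). -/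
/-!
Fix `h > 0` and suppose `g (s, h) ≥ c` for all `s ≥ t`. Chaining the coboundary bound along
`t, t + h, t + 2h, …` gives `g (t, n h) ≥ n (c - S)`, and monotonicity in the second variable
interpolates between the multiples of `h`, so `liminf_{H → ∞} g (t, H) / H ≥ (c - S) / h`.
Taking `c / h` close to `liminf_{s → ∞} g (s, h) / h` and `h` so large that `S / h` is negligible
gives the first inequality. The second is the first one for `-g`, which satisfies the same
one-sided bound; only the rounding of `H / h` has to go up instead of down.
-/

open Filter Topology

theorem MonotoneOn.apply_floor_div_mul_le {φ : ℝ → ℝ} (hφ : MonotoneOn φ (Set.Ioi 0))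
    {h H : ℝ} (hh : 0 < h) (hH : h ≤ H) : φ (⌊H / h⌋₊ * h) ≤ φ H :=
  hφ (mul_pos (Nat.cast_pos.2 (Nat.floor_pos.2 ((one_le_div hh).2 hH))) hh) (hh.trans_le hH)
    ((le_div_iff₀ hh).1 (Nat.floor_le (div_pos (hh.trans_le hH) hh).le))

theorem MonotoneOn.apply_le_apply_ceil_div_mul {φ : ℝ → ℝ} (hφ : MonotoneOn φ (Set.Ioi 0))
    {h H : ℝ} (hh : 0 < h) (hH : 0 < H) : φ H ≤ φ (⌈H / h⌉₊ * h) :=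
  hφ hH (hH.trans_le ((div_le_iff₀ hh).1 (Nat.le_ceil _))) ((div_le_iff₀ hh).1 (Nat.le_ceil _))

theorem EReal.liminf_fun_neg {α : Type*} {l : Filter α} (u : α → EReal) :
    liminf (fun x => -u x) l = -limsup u l :=
  EReal.liminf_neg

/-- The lower half of the coboundary bound `|g t (h + k) - g (t + h) k - g t h| ≤ S`. -/
def AlmostSuperadditive (f : ℝ → ℝ → ℝ) (t₀ S : ℝ) : Prop :=
  ∀ t > t₀, ∀ h > (0 : ℝ), ∀ k > (0 : ℝ), f t h + f (t + h) k - S ≤ f t (h + k)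

namespace AlmostSuperadditive

variable {f : ℝ → ℝ → ℝ} {t₀ S : ℝ}

theorem natCast_mul_sub_le (hf : AlmostSuperadditive f t₀ S) (hS : 0 ≤ S) {h c : ℝ}
    (hh : 0 < h) {n : ℕ} (hn : 1 ≤ n) :
    ∀ t > t₀, (∀ s ≥ t, c ≤ f s h) → n * (c - S) ≤ f t (n * h) := by
  induction n, hn using Nat.le_induction with
  | base =>
    intro t _ hc
    simp only [Nat.cast_one, one_mul]
    linarith [hc t le_rfl]
  | succ n hn ih =>
    intro t ht hc
    have hstep := hf t ht h hh (n * h) (by positivity)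
    have hrest := ih (t + h) (by linarith) fun s hs => hc s (by linarith)
    have hfirst := hc t le_rfl
    rw [show ((n + 1 : ℕ) : ℝ) * h = h + n * h by push_cast; ring]
    push_cast
    linarith

-- `N` rounds `H / h` to a positive integer (`⌊·⌋₊` for `g`, `⌈·⌉₊` for `-g`); `hround` says
-- that `f t` at the rounded multiple of `h` is below `f t H`.
variable {N : ℝ → ℕ}

theorem coe_le_liminf_div (hf : AlmostSuperadditive f t₀ S) (hS : 0 ≤ S)
    (hN : Tendsto (fun x => (N x : ℝ) / x) atTop (𝓝 1)) (hN1 : ∀ x ≥ 1, 1 ≤ N x)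
    (hround : ∀ t > t₀, ∀ h > (0 : ℝ), ∀ H ≥ h, f t (N (H / h) * h) ≤ f t H)
    {t h c : ℝ} (ht : t₀ < t) (hh : 0 < h) (hc : ∀ s ≥ t, c ≤ f s h) :
    (((c - S) / h : ℝ) : EReal) ≤ liminf (fun H => ((f t H / H : ℝ) : EReal)) atTop := by
  have hlim : Tendsto (fun H => (c - S) * ((N (H / h) : ℝ) / (H / h)) / h) atTop
      (𝓝 ((c - S) / h)) := by
    simpa using ((hN.comp (tendsto_id.atTop_div_const hh)).const_mul (c - S)).div_const h
  rw [← (EReal.tendsto_coe.2 hlim).liminf_eq]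
  refine liminf_le_liminf ?_
  filter_upwards [eventually_ge_atTop h] with H hH
  have hH0 : 0 < H := hh.trans_le hH
  have hbound : N (H / h) * (c - S) ≤ f t H :=
    (hf.natCast_mul_sub_le hS hh (hN1 _ ((one_le_div hh).2 hH)) t ht hc).trans
      (hround t ht h hh H hH)
  rw [EReal.coe_le_coe_iff]
  calc (c - S) * ((N (H / h) : ℝ) / (H / h)) / h = N (H / h) * (c - S) / H := by
        field_simp
    _ ≤ f t H / H := by gcongr

theorem coe_sub_le_liminf_liminf_div (hf : AlmostSuperadditive f t₀ S) (hS : 0 ≤ S)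
    (hN : Tendsto (fun x => (N x : ℝ) / x) atTop (𝓝 1)) (hN1 : ∀ x ≥ 1, 1 ≤ N x)
    (hround : ∀ t > t₀, ∀ h > (0 : ℝ), ∀ H ≥ h, f t (N (H / h) * h) ≤ f t H)
    {h b : ℝ} (hh : 0 < h)
    (hb : (b : EReal) < liminf (fun t => ((f t h / h : ℝ) : EReal)) atTop) :
    ((b - S / h : ℝ) : EReal) ≤
      liminf (fun t => liminf (fun H => ((f t H / H : ℝ) : EReal)) atTop) atTop := by
  obtain ⟨T, hT⟩ := eventually_atTop.1 (eventually_lt_of_lt_liminf hb)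
  refine le_liminf_of_le (by isBoundedDefault) ?_
  filter_upwards [eventually_ge_atTop T, eventually_gt_atTop t₀] with t hTt ht
  have hc : ∀ s ≥ t, b * h ≤ f s h := fun s hs =>
    ((lt_div_iff₀ hh).1 (EReal.coe_lt_coe_iff.1 (hT s (hTt.trans hs)))).le
  convert hf.coe_le_liminf_div hS hN hN1 hround ht hh hc using 2
  field_simp

theorem liminf_liminf_div_le (hf : AlmostSuperadditive f t₀ S) (hS : 0 ≤ S)
    (hN : Tendsto (fun x => (N x : ℝ) / x) atTop (𝓝 1)) (hN1 : ∀ x ≥ 1, 1 ≤ N x)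
    (hround : ∀ t > t₀, ∀ h > (0 : ℝ), ∀ H ≥ h, f t (N (H / h) * h) ≤ f t H) :
    liminf (fun h => liminf (fun t => ((f t h / h : ℝ) : EReal)) atTop) atTop ≤
      liminf (fun t => liminf (fun h => ((f t h / h : ℝ) : EReal)) atTop) atTop := by
  refine le_of_forall_lt_imp_le_of_dense fun y hy => ?_
  obtain ⟨b, hyb, hb⟩ := EReal.exists_between_coe_real hy
  obtain ⟨a, hya, hab⟩ := EReal.exists_between_coe_real hyb
  have hS_div : Tendsto (fun h : ℝ => S / h) atTop (𝓝 0) :=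
    tendsto_const_nhds.div_atTop tendsto_id
  obtain ⟨h, hbh, hSh_le, hh⟩ := ((eventually_lt_of_lt_liminf hb).and
    ((hS_div.eventually (ge_mem_nhds (sub_pos.2 (EReal.coe_lt_coe_iff.1 hab)))).and
      (eventually_gt_atTop 0))).exists
  calc y ≤ a := hya.le
    _ ≤ ((b - S / h : ℝ) : EReal) := EReal.coe_le_coe_iff.2 (by linarith)
    _ ≤ _ := hf.coe_sub_le_liminf_liminf_div hS hN hN1 hround hh hbh

end AlmostSuperadditive

theorem stmt14 (t₀ S : ℝ) (g : ℝ → ℝ → ℝ)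
    (hmono : ∀ t > t₀, ∀ h₁ h₂ : ℝ, 0 < h₁ → h₁ ≤ h₂ → g t h₁ ≤ g t h₂)
    (hS : ∀ t > t₀, ∀ h > (0 : ℝ), ∀ k > (0 : ℝ),
      |g t (h + k) - g (t + h) k - g t h| ≤ S) :
    liminf (fun t : ℝ => liminf (fun h : ℝ => ((g t h / h : ℝ) : EReal)) atTop) atTop ≥
        liminf (fun h : ℝ => liminf (fun t : ℝ => ((g t h / h : ℝ) : EReal)) atTop) atTop ∧
      limsup (fun t : ℝ => limsup (fun h : ℝ => ((g t h / h : ℝ) : EReal)) atTop) atTop ≤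
        limsup (fun h : ℝ => limsup (fun t : ℝ => ((g t h / h : ℝ) : EReal)) atTop) atTop := by
  have hS0 : 0 ≤ S := (abs_nonneg _).trans (hS (t₀ + 1) (by linarith) 1 one_pos 1 one_pos)
  have hg : AlmostSuperadditive g t₀ S := fun t ht h hh k hk => by
    linarith [(abs_le.1 (hS t ht h hh k hk)).1]
  have hng : AlmostSuperadditive (fun t h => -g t h) t₀ S := fun t ht h hh k hk => by
    linarith [(abs_le.1 (hS t ht h hh k hk)).2]
  have hmonoOn : ∀ t > t₀, MonotoneOn (g t) (Set.Ioi 0) := fun t ht a ha b _ hab =>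
    hmono t ht a b ha hab
  constructor
  · exact hg.liminf_liminf_div_le hS0 tendsto_nat_floor_div_atTop
      (fun x hx => Nat.le_floor (by simpa using hx))
      fun t ht h hh H hH => (hmonoOn t ht).apply_floor_div_mul_le hh hH
  · have hneg := hng.liminf_liminf_div_le hS0 tendsto_nat_ceil_div_atTop
      (fun x hx => Nat.one_le_ceil_iff.2 (by linarith))
      fun t ht h hh H hH =>
        neg_le_neg ((hmonoOn t ht).apply_le_apply_ceil_div_mul hh (hh.trans_le hH))
    simpa only [neg_div, EReal.coe_neg, EReal.liminf_fun_neg, EReal.neg_le_neg_iff] using hneg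
end

section
/- Let g : (t₀,∞) × (0,∞) → ℝ be nondecreasing in the second variable with S := sup_{t>t₀,h,k>0} |g(t,h+k) − g(t+h,k) − g(t,h)| < ∞. If limsup_{t→∞} g(t,h₀) = +∞ for some h₀ > 0, then lim_{h→∞} limsup_{t→∞} g(t,h)/h = +∞. Conversely, setting ḡ(h) = limsup_{t→∞} g(t,h), one has ḡ(h) ≥ h · lim_{h'→∞} limsup_{t→∞} g(t,h')/h' − S for every h > 0. -/
open Filter Topology

/-! Fix `h > 0` and `ℓ` with `g (s, h) ≤ ℓ` for all large `s`. Splitting a step of length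
`(n + 1) h` into `n + 1` steps of length `h`, the one-sided cocycle bound gives
`g (t, (n + 1) h) ≤ (n + 1) ℓ + n S`; by monotonicity in the second variable, with
`n = ⌊h' / h⌋`, this yields `g (t, h') ≤ h' (ℓ + S) / h + O(1)`. Hence the double limsup of
`g (t, h') / h'` is at most `(ℓ + S) / h`, and letting `ℓ` decrease to `limsup_t g (t, h)` gives
the second claim. The first one needs only monotonicity: `g (t, h) ≥ g (t, h₀)` for `h ≥ h₀`. -/

section CocycleBound

variable {t₀ S ℓ h t : ℝ} {g : ℝ → ℝ → ℝ}

lemma apply_succ_mul_le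
    (hS : ∀ t > t₀, ∀ h > (0 : ℝ), ∀ k > (0 : ℝ), g t (h + k) ≤ g (t + h) k + g t h + S)
    (hh : 0 < h) (ht : t₀ < t) (hℓ : ∀ s ≥ t, g s h ≤ ℓ) (n : ℕ) :
    g t ((n + 1) * h) ≤ (n + 1) * ℓ + n * S := by
  induction n with
  | zero => simpa using hℓ t le_rfl
  | succ n ih =>
    have hstep := hS t ht ((n + 1) * h) (by positivity) h hh
    have hlast := hℓ (t + (n + 1) * h) (le_add_of_nonneg_right (by positivity))
    push_cast
    rw [add_mul _ 1 h, one_mul]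
    linarith

lemma apply_le_div_mul_add
    (hmono : ∀ t > t₀, ∀ h₁ h₂ : ℝ, 0 < h₁ → h₁ ≤ h₂ → g t h₁ ≤ g t h₂)
    (hS : ∀ t > t₀, ∀ h > (0 : ℝ), ∀ k > (0 : ℝ), g t (h + k) ≤ g (t + h) k + g t h + S)
    (hh : 0 < h) (ht : t₀ < t) (hℓ : ∀ s ≥ t, g s h ≤ ℓ) {h' : ℝ} (hh' : 0 < h') :
    g t h' ≤ h' / h * (ℓ + S) + (|ℓ + S| + ℓ) := by
  set n := ⌊h' / h⌋₊
  have hn_le : (n : ℝ) ≤ h' / h := Nat.floor_le (by positivity)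
  have hn_gt : h' / h < n + 1 := Nat.lt_floor_add_one _
  have hh'_le : h' ≤ (n + 1) * h := ((div_lt_iff₀ hh).1 hn_gt).le
  have hdist : |(n : ℝ) - h' / h| ≤ 1 := abs_le.2 ⟨by linarith, by linarith⟩
  have hround : ((n : ℝ) - h' / h) * (ℓ + S) ≤ |ℓ + S| :=
    calc ((n : ℝ) - h' / h) * (ℓ + S) ≤ |((n : ℝ) - h' / h) * (ℓ + S)| := le_abs_self _
      _ = |(n : ℝ) - h' / h| * |ℓ + S| := abs_mul _ _
      _ ≤ |ℓ + S| := mul_le_of_le_one_left (abs_nonneg _) hdist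
  calc g t h' ≤ g t ((n + 1) * h) := hmono t ht h' _ hh' hh'_le
    _ ≤ (n + 1) * ℓ + n * S := apply_succ_mul_le hS hh ht hℓ n
    _ ≤ h' / h * (ℓ + S) + (|ℓ + S| + ℓ) := by linarith

lemma limsup_apply_div_le
    (hmono : ∀ t > t₀, ∀ h₁ h₂ : ℝ, 0 < h₁ → h₁ ≤ h₂ → g t h₁ ≤ g t h₂)
    (hS : ∀ t > t₀, ∀ h > (0 : ℝ), ∀ k > (0 : ℝ), g t (h + k) ≤ g (t + h) k + g t h + S)
    (hh : 0 < h) (hℓ : ∀ᶠ t in atTop, g t h ≤ ℓ) {h' : ℝ} (hh' : 0 < h') :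
    limsup (fun t : ℝ => ((g t h' / h' : ℝ) : EReal)) atTop ≤
      (((ℓ + S) / h + (|ℓ + S| + ℓ) / h' : ℝ) : EReal) := by
  obtain ⟨T, hT⟩ := eventually_atTop.1 (hℓ.and (eventually_gt_atTop t₀))
  refine limsup_le_of_le (by isBoundedDefault) (eventually_atTop.2 ⟨T, fun t ht => ?_⟩)
  have hlin :=
    apply_le_div_mul_add hmono hS hh (hT t ht).2 (fun s hs => (hT s (ht.trans hs)).1) hh'
  rw [EReal.coe_le_coe_iff]
  calc g t h' / h' ≤ (h' / h * (ℓ + S) + (|ℓ + S| + ℓ)) / h' :=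
        div_le_div_of_nonneg_right hlin hh'.le
    _ = (ℓ + S) / h + (|ℓ + S| + ℓ) / h' := by field_simp

end CocycleBound

lemma limsup_le_of_eventually_le_add_div {F : ℝ → EReal} {a C : ℝ}
    (hF : ∀ᶠ x in atTop, F x ≤ ((a + C / x : ℝ) : EReal)) : limsup F atTop ≤ a := by
  have hlim : Tendsto (fun x : ℝ => a + C / x) atTop (𝓝 a) := by
    simpa using tendsto_const_nhds.add ((tendsto_const_nhds (x := C)).div_atTop tendsto_id)
  calc limsup F atTop ≤ limsup (fun x : ℝ => ((a + C / x : ℝ) : EReal)) atTop :=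
        limsup_le_limsup hF
    _ = a := (EReal.tendsto_coe.2 hlim).limsup_eq

lemma limsup_coe_div_eq_top {α : Type*} {f : Filter α} [NeBot f] {u : α → ℝ} {c : ℝ}
    (hc : 0 < c) (hu : limsup (fun x => (u x : EReal)) f = ⊤) :
    limsup (fun x => ((u x / c : ℝ) : EReal)) f = ⊤ := by
  have hc' : (0 : EReal) < (c⁻¹ : ℝ) := by exact_mod_cast inv_pos.2 hc
  simp_rw [div_eq_inv_mul, EReal.coe_mul]
  rw [EReal.limsup_const_mul_of_nonneg_of_ne_top hc'.le (EReal.coe_ne_top _), hu,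
    EReal.mul_top_of_pos hc']

lemma EReal.coe_mul_sub_le_of_le_coe_div {a b c : ℝ} {M : EReal} (hc : 0 < c)
    (hM : M ≤ ((a + b) / c : ℝ)) : (c : EReal) * M - b ≤ a :=
  calc (c : EReal) * M - b ≤ (c : EReal) * ((a + b) / c : ℝ) - b :=
        EReal.sub_le_sub (mul_le_mul_of_nonneg_left hM (by exact_mod_cast hc.le)) le_rfl
    _ = a := by
        rw [← EReal.coe_mul, ← EReal.coe_sub, mul_div_cancel₀ _ hc.ne', _root_.add_sub_cancel_right]

theorem stmt15 (t₀ S : ℝ) (g : ℝ → ℝ → ℝ)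
    (hmono : ∀ t > t₀, ∀ h₁ h₂ : ℝ, 0 < h₁ → h₁ ≤ h₂ → g t h₁ ≤ g t h₂)
    (hS : ∀ t > t₀, ∀ h > (0 : ℝ), ∀ k > (0 : ℝ),
      |g t (h + k) - g (t + h) k - g t h| ≤ S) :
    ((∃ h₀ > (0 : ℝ), limsup (fun t : ℝ => ((g t h₀ : ℝ) : EReal)) atTop = ⊤) →
        limsup (fun h : ℝ => limsup (fun t : ℝ => ((g t h / h : ℝ) : EReal)) atTop) atTop = ⊤) ∧
      ∀ h > (0 : ℝ),
        limsup (fun t : ℝ => ((g t h : ℝ) : EReal)) atTop ≥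
          ((h : ℝ) : EReal) *
              limsup (fun h' : ℝ => limsup (fun t : ℝ => ((g t h' / h' : ℝ) : EReal)) atTop)
                atTop -
            ((S : ℝ) : EReal) := by
  have hS' : ∀ t > t₀, ∀ h > (0 : ℝ), ∀ k > (0 : ℝ), g t (h + k) ≤ g (t + h) k + g t h + S :=
    fun t ht h hh k hk => by linarith [(abs_le.1 (hS t ht h hh k hk)).2]
  refine ⟨fun ⟨h₀, hh₀, htop⟩ => ?_, fun h hh => ?_⟩
  · have hinner : ∀ᶠ h in atTop, limsup (fun t => ((g t h / h : ℝ) : EReal)) atTop = ⊤ := by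
      filter_upwards [eventually_ge_atTop h₀] with h hh
      refine limsup_coe_div_eq_top (hh₀.trans_le hh) (top_le_iff.1 (htop ▸ limsup_le_limsup ?_))
      filter_upwards [eventually_gt_atTop t₀] with t ht
      exact EReal.coe_le_coe_iff.2 (hmono t ht h₀ h hh₀ hh)
    rw [limsup_congr hinner, limsup_const]
  · rw [ge_iff_le, ← EReal.le_of_forall_lt_iff_le]
    intro ℓ hℓ
    have hℓ' : ∀ᶠ t in atTop, g t h ≤ ℓ :=
      (eventually_lt_of_limsup_lt hℓ).mono fun t ht => (EReal.coe_lt_coe_iff.1 ht).le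
    exact EReal.coe_mul_sub_le_of_le_coe_div hh <| limsup_le_of_eventually_le_add_div <|
      (eventually_gt_atTop 0).mono fun h' hh' => limsup_apply_div_le hmono hS' hh hℓ' hh'
end

section
/- Let g : (t₀,∞) × (0,∞) → ℝ be nondecreasing in the second variable with S := sup_{t>t₀,h,k>0}|g(t,h+k) − g(t+h,k) − g(t,h)| < ∞, and set p(t,h) = g(t,h)/h. For κ > 0 define Ṽ_h^d = {t > 0 : p(t,j) > d for all j ∈ κℕ with j ≤ h}, Ṽ^d = {h ∈ κℕ : sup Ṽ_h^d = +∞}, Ṽ = {d : sup Ṽ^d = +∞}, and analogously V_h^d = {t : p(t,h) > d}, V^d, V without the 'for all j' restriction. Then 0 ≤ sup V − sup Ṽ ≤ 2S/κ. -/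
/-!
`Ṽ^d ⊆ V^d` gives the first inequality. For the second, let `d ∈ V` and suppose that
`d' = d - S/κ - ε ∉ Ṽ`. Then for some `n₀` every late enough `t` has a cheap window: a grid
length `κ m ≤ κ n₀` with `g t (κ m) ≤ κ m d'`. Chaining cheap windows, each junction costing at
most `S` by the coboundary bound, gives grid lengths `κ a` arbitrarily far out, within `κ n₀` of
any prescribed one, with `g t (κ a) ≤ a (κ d' + S) = κ a (d - ε)`. By monotonicity in `h` this
contradicts `g t (κ n) > κ n d` for large `n ∈ V^d`. Hence `sup V ≤ sup Ṽ + S/κ`.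
-/

/-- `V` and `Ṽ` are `unboundedLevels κ Q` for `Q d t h := d < p t h` and
`Q d t h := ∀ j ∈ κℕ, j ≤ h → d < p t j` respectively. -/
def unboundedLevels (κ : ℝ) (Q : ℝ → ℝ → ℝ → Prop) : Set ℝ :=
  {d | ¬ BddAbove {h | (∃ n : ℕ, 0 < n ∧ h = κ * n) ∧ ¬ BddAbove {t | 0 < t ∧ Q d t h}}}

theorem unboundedLevels_mono {κ : ℝ} {Q Q' : ℝ → ℝ → ℝ → Prop}
    (hQ : ∀ d t, ∀ n : ℕ, 0 < n → Q d t (κ * n) → Q' d t (κ * n)) :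
    unboundedLevels κ Q ⊆ unboundedLevels κ Q' := by
  intro d hd hbdd
  refine hd (hbdd.mono ?_)
  rintro _ ⟨⟨n, hn, rfl⟩, hunb⟩
  refine ⟨⟨n, hn, rfl⟩, fun hb => hunb (hb.mono ?_)⟩
  exact fun t ht => ⟨ht.1, hQ d t n hn ht.2⟩

theorem EReal.sSup_coe_image_le_add {A B : Set ℝ} {c : ℝ}
    (h : ∀ d ∈ A, ∀ ε > 0, d - c - ε ∈ B) :
    sSup (((↑) : ℝ → EReal) '' A) ≤ sSup (((↑) : ℝ → EReal) '' B) + c := by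
  refine sSup_le ?_
  rintro _ ⟨d, hd, rfl⟩
  rw [← EReal.sub_le_iff_le_add (.inl (EReal.coe_ne_bot c)) (.inl (EReal.coe_ne_top c)),
    ← EReal.coe_sub]
  refine le_of_forall_lt_imp_le_of_dense fun z hz => ?_
  obtain ⟨x, hzx, hx⟩ := EReal.lt_iff_exists_real_btwn.mp hz
  have hε : 0 < d - c - x := by linarith [EReal.coe_lt_coe_iff.mp hx]
  calc z ≤ x := hzx.le
    _ = ((d - c - (d - c - x) : ℝ) : EReal) := by ring_nf
    _ ≤ _ := le_sSup (Set.mem_image_of_mem _ (h d hd _ hε))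

theorem exists_grid_le_of_cheap_windows {t₀ S κ c B : ℝ} {g : ℝ → ℝ → ℝ} {n₀ : ℕ}
    (hsub : ∀ t > t₀, ∀ h > (0 : ℝ), ∀ k > (0 : ℝ), g t (h + k) ≤ g t h + g (t + h) k + S)
    (hκ : 0 < κ) (hS : 0 ≤ S) (hB : t₀ ≤ B)
    (hcheap : ∀ s > B, ∃ m : ℕ, 0 < m ∧ m ≤ n₀ ∧ g s (κ * m) ≤ κ * m * c) (N : ℕ) :
    ∀ s > B, ∃ a : ℕ, N < a ∧ a ≤ N + n₀ ∧ g s (κ * a) ≤ a * (κ * c + S) := by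
  induction N using Nat.strong_induction_on with
  | _ N ih =>
    intro s hs
    obtain ⟨m, hm, hmn₀, hgm⟩ := hcheap s hs
    have hm' : (0 : ℝ) < m := Nat.cast_pos.mpr hm
    by_cases hNm : N < m
    · exact ⟨m, hNm, by omega, by nlinarith⟩
    obtain ⟨a, hNa, han₀, hga⟩ := ih (N - m) (by omega) (s + κ * m) (by nlinarith)
    have ha' : (0 : ℝ) < a := Nat.cast_pos.mpr (by omega)
    refine ⟨m + a, by omega, by omega, ?_⟩
    have hsplit := hsub s (by linarith) (κ * m) (by positivity) (κ * a) (by positivity)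
    have hmS : S ≤ m * S := le_mul_of_one_le_left hS (by exact_mod_cast hm)
    push_cast
    rw [mul_add]
    nlinarith

theorem exists_cheap_windows_of_bddAbove {t₀ κ c : ℝ} {g : ℝ → ℝ → ℝ} {n₀ : ℕ} (hκ : 0 < κ)
    (hbdd : BddAbove {t | 0 < t ∧
      ∀ j : ℝ, (∃ m : ℕ, 0 < m ∧ j = κ * m) → j ≤ κ * n₀ → c < g t j / j}) :
    ∃ B ≥ t₀, ∀ s > B, ∃ m : ℕ, 0 < m ∧ m ≤ n₀ ∧ g s (κ * m) ≤ κ * m * c := by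
  obtain ⟨T, hT⟩ := hbdd
  refine ⟨max (max T t₀) 0, by simp, fun s hs => ?_⟩
  simp only [gt_iff_lt, max_lt_iff] at hs
  by_contra! hcheap
  refine hs.1.1.not_ge (hT ⟨hs.2, ?_⟩)
  rintro _ ⟨m, hm, rfl⟩ hmn₀
  have hκm : 0 < κ * m := mul_pos hκ (Nat.cast_pos.mpr hm)
  rw [lt_div_iff₀ hκm, mul_comm]
  exact hcheap m hm (by exact_mod_cast le_of_mul_le_mul_left hmn₀ hκ)

theorem coboundary_bound_nonneg {t₀ S : ℝ} {g : ℝ → ℝ → ℝ}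
    (hS : ∀ t > t₀, ∀ h > (0 : ℝ), ∀ k > (0 : ℝ), |g t (h + k) - g (t + h) k - g t h| ≤ S) :
    0 ≤ S :=
  (abs_nonneg _).trans (hS (t₀ + 1) (by linarith) 1 one_pos 1 one_pos)

theorem sub_mem_unboundedLevels_cumulative {t₀ S κ d ε : ℝ} {g : ℝ → ℝ → ℝ}
    (hmono : ∀ t > t₀, ∀ h₁ h₂ : ℝ, 0 < h₁ → h₁ ≤ h₂ → g t h₁ ≤ g t h₂)
    (hS : ∀ t > t₀, ∀ h > (0 : ℝ), ∀ k > (0 : ℝ), |g t (h + k) - g (t + h) k - g t h| ≤ S)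
    (hκ : 0 < κ) (hd : d ∈ unboundedLevels κ fun d t h => d < g t h / h) (hε : 0 < ε) :
    d - S / κ - ε ∈ unboundedLevels κ fun d t h =>
      ∀ j : ℝ, (∃ m : ℕ, 0 < m ∧ j = κ * m) → j ≤ h → d < g t j / j := by
  have hS₀ : 0 ≤ S := coboundary_bound_nonneg hS
  have hsub : ∀ t > t₀, ∀ h > (0 : ℝ), ∀ k > (0 : ℝ), g t (h + k) ≤ g t h + g (t + h) k + S :=
    fun t ht h hh k hk => by linarith [(abs_le.mp (hS t ht h hh k hk)).2]
  refine not_bddAbove_iff.mpr fun x => ?_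
  obtain ⟨n₀, hn₀⟩ := exists_nat_gt (max (x / κ) 0)
  rw [max_lt_iff, div_lt_iff₀ hκ, mul_comm] at hn₀
  refine ⟨κ * n₀, ⟨⟨n₀, by exact_mod_cast hn₀.2, rfl⟩, fun hbdd => ?_⟩, hn₀.1⟩
  obtain ⟨B, hB, hcheap⟩ := exists_cheap_windows_of_bddAbove (t₀ := t₀) hκ hbdd
  obtain ⟨_, ⟨⟨n, hn, rfl⟩, hunb⟩, hnR⟩ := not_bddAbove_iff.mp hd (κ * n₀ * |d| / ε)
  obtain ⟨t, ⟨-, ht⟩, htB⟩ := not_bddAbove_iff.mp hunb B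
  obtain ⟨a, hna, han₀, hga⟩ :=
    exists_grid_le_of_cheap_windows hsub hκ hS₀ hB hcheap n t htB
  have hgn : g t (κ * n) ≤ g t (κ * a) :=
    hmono t (by linarith) _ _ (mul_pos hκ (by exact_mod_cast hn))
      (mul_le_mul_of_nonneg_left (by exact_mod_cast hna.le) hκ.le)
  rw [lt_div_iff₀ (mul_pos hκ (by exact_mod_cast hn))] at ht
  rw [div_lt_iff₀ hε] at hnR
  have hκd : κ * (d - S / κ - ε) + S = κ * d - κ * ε := by field_simp; ring
  rw [hκd] at hga
  have hna' : (n : ℝ) < a := by exact_mod_cast hna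
  have han₀' : (a : ℝ) ≤ n + n₀ := by exact_mod_cast han₀
  have hdrift : (a - n) * (κ * d) ≤ n₀ * (κ * |d|) :=
    calc (a - n) * (κ * d) ≤ (a - n) * (κ * |d|) :=
          mul_le_mul_of_nonneg_left (mul_le_mul_of_nonneg_left (le_abs_self d) hκ.le) (by linarith)
      _ ≤ n₀ * (κ * |d|) := mul_le_mul_of_nonneg_right (by linarith) (by positivity)
  have hloss : κ * n * ε ≤ a * (κ * ε) := by
    nlinarith [mul_le_mul_of_nonneg_right hna'.le (mul_pos hκ hε).le]
  linarith

theorem stmt17 (t₀ S : ℝ) (g : ℝ → ℝ → ℝ)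
    (hmono : ∀ t > t₀, ∀ h₁ h₂ : ℝ, 0 < h₁ → h₁ ≤ h₂ → g t h₁ ≤ g t h₂)
    (hS : ∀ t > t₀, ∀ h > (0 : ℝ), ∀ k > (0 : ℝ),
      |g t (h + k) - g (t + h) k - g t h| ≤ S)
    (κ : ℝ) (hκ : 0 < κ)
    -- `p t h = g t h / h`
    (p : ℝ → ℝ → ℝ) (hp : ∀ t h, p t h = g t h / h)
    -- `sup V` : supremum of the `d` with `V^d` unbounded
    (supV : EReal)
    (hsupV : supV = sSup ((fun d : ℝ => (d : EReal)) ''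
      {d : ℝ | ¬ BddAbove {h : ℝ | (∃ n : ℕ, 0 < n ∧ h = κ * n) ∧
        ¬ BddAbove {t : ℝ | 0 < t ∧ d < p t h}}}))
    -- `sup Ṽ` : supremum of the `d` with `Ṽ^d` unbounded
    (supVt : EReal)
    (hsupVt : supVt = sSup ((fun d : ℝ => (d : EReal)) ''
      {d : ℝ | ¬ BddAbove {h : ℝ | (∃ n : ℕ, 0 < n ∧ h = κ * n) ∧
        ¬ BddAbove {t : ℝ | 0 < t ∧
          ∀ j : ℝ, (∃ m : ℕ, 0 < m ∧ j = κ * m) → j ≤ h → d < p t j}}})) :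
    supVt ≤ supV ∧ supV ≤ supVt + ((2 * S / κ : ℝ) : EReal) := by
  obtain rfl : p = fun t h => g t h / h := funext₂ hp
  subst hsupV hsupVt
  have hS₀ := coboundary_bound_nonneg hS
  refine ⟨sSup_le_sSup (Set.image_mono (unboundedLevels_mono ?_)),
    (EReal.sSup_coe_image_le_add (c := S / κ) fun d hd ε hε => ?_).trans (by gcongr; linarith)⟩
  · exact fun d t n hn hQ => hQ _ ⟨n, hn, rfl⟩ le_rfl
  · exact sub_mem_unboundedLevels_cumulative hmono hS hκ hd hε
end

section
/- Let g : (t₀,∞) × (0,∞) → ℝ be nondecreasing in the second variable with S := sup_{t>t₀,h,k>0}|g(t,h+k) − g(t+h,k) − g(t,h)| < ∞. Then: (a) for every sequence t_n → ∞, limsup_{h→∞} limsup_n g(t_n,h)/h ≤ limsup_{h→∞} limsup_{t→∞} g(t,h)/h; (b) for every κ > 0 there exists a sequence t̄_n → ∞ with limsup_{h→∞} limsup_{t→∞} g(t,h)/h ≤ liminf_{h→∞} liminf_n g(t̄_n,h)/h + 2S/κ. -/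
open Filter Topology

/-!
Part (a) is the monotonicity of `limsup` under composition with a sequence tending to infinity.

For (b), let `L` be the double `limsup` and `0 ≤ c < c' < L`. There are large `h` and `s₀` with
`g s₀ h > c' h`; minimising `p ↦ g s₀ p - p c` over the integers `p ≤ h` (a discrete rising-sun
argument) yields an integer `j` with `g s₀ (j + q) - g s₀ j ≥ q c` for `q = 1, …, m`, and the
coboundary bound turns this into `g (s₀ + j) q ≥ q c - S`. Doing this with slopes increasing to `L`
and horizons `m = n` gives a sequence `t̄ₙ` along which, by monotonicity in `h`,
`liminf g (t̄ₙ, h) / h ≥ ((h - 1) c - S) / h → c`. Hence `L` is at most the double `liminf`, and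
`2 S / κ ≥ 0`.
-/

/-- Discrete rising-sun lemma: `j` is a minimiser of `φ` on `[0, M]`. -/
lemma exists_forall_apply_le_apply_add {α : Type*} [LinearOrder α] (φ : ℕ → α) (M m : ℕ)
    (htail : ∀ p, M < p → p ≤ M + m → φ 0 ≤ φ p) : ∃ j, ∀ q ≤ m, φ j ≤ φ (j + q) := by
  obtain ⟨j, hjM, hjmin⟩ := (Finset.range (M + 1)).exists_min_image φ ⟨0, by simp⟩
  refine ⟨j, fun q hq => ?_⟩
  rw [Finset.mem_range] at hjM
  by_cases hjq : j + q ≤ M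
  · exact hjmin _ (Finset.mem_range.2 (by omega))
  · exact (hjmin 0 (by simp)).trans (htail _ (by omega) (by omega))

lemma EReal.exists_seq_nonneg_eventually_ge (L : EReal) :
    ∃ u : ℕ → ℝ, (∀ n, 0 ≤ u n ∧ ((u n : EReal) < L ∨ u n = 0)) ∧
      ∀ z : ℝ, (z : EReal) < L → ∀ᶠ n in atTop, z ≤ u n := by
  by_cases hL : 0 < L
  · obtain ⟨v, -, hv, hvL⟩ := exists_seq_strictMono_tendsto' hL
    have hv_coe : ∀ n, ((v n).toReal : EReal) = v n := fun n =>
      EReal.coe_toReal (hv n).2.ne_top (hv n).1.ne_bot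
    refine ⟨fun n => (v n).toReal,
      fun n => ⟨EReal.toReal_nonneg (hv n).1.le, .inl ((hv_coe n).trans_lt (hv n).2)⟩,
      fun z hz => ?_⟩
    filter_upwards [hvL.eventually (lt_mem_nhds hz)] with n hn
    exact EReal.coe_le_coe_iff.1 (hn.le.trans_eq (hv_coe n).symm)
  · refine ⟨0, fun _ => ⟨le_rfl, .inr rfl⟩, fun z hz => .of_forall fun _ => ?_⟩
    exact_mod_cast (hz.trans_le (not_lt.1 hL)).le

def MonotoneSnd (t₀ : ℝ) (g : ℝ → ℝ → ℝ) : Prop :=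
  ∀ t > t₀, ∀ h₁ h₂ : ℝ, 0 < h₁ → h₁ ≤ h₂ → g t h₁ ≤ g t h₂

def BoundedCoboundary (t₀ S : ℝ) (g : ℝ → ℝ → ℝ) : Prop :=
  ∀ t > t₀, ∀ h > (0 : ℝ), ∀ k > (0 : ℝ), |g t (h + k) - g (t + h) k - g t h| ≤ S

def AdmitsSlope (t₀ S : ℝ) (g : ℝ → ℝ → ℝ) (c : ℝ) : Prop :=
  ∀ (m : ℕ) (R : ℝ), ∃ s > max R t₀, ∀ q : ℕ, 1 ≤ q → q ≤ m → q * c - S ≤ g s q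

section Cocycle

variable {t₀ S : ℝ} {g : ℝ → ℝ → ℝ}

lemma BoundedCoboundary.nonneg (hS : BoundedCoboundary t₀ S g) : 0 ≤ S :=
  (abs_nonneg _).trans (hS (t₀ + 1) (by linarith) 1 one_pos 1 one_pos)

lemma BoundedCoboundary.sub_le (hS : BoundedCoboundary t₀ S g) {t h k : ℝ} (ht : t₀ < t)
    (hh : 0 < h) (hk : 0 < k) : g t (h + k) - g t h - S ≤ g (t + h) k := by
  have := (abs_le.1 (hS t ht h hh k hk)).2
  linarith

lemma neg_le_of_boundedCoboundary (hmono : MonotoneSnd t₀ g) (hS : BoundedCoboundary t₀ S g)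
    {s k : ℝ} (hs : t₀ < s) (hk : 0 < k) : -S ≤ g s k := by
  set d := (s - t₀) / 2
  have hd : 0 < d := by simp only [d]; linarith
  have hbase : t₀ < s - d := by simp only [d]; linarith
  have hcob := hS.sub_le hbase hd hk
  rw [sub_add_cancel] at hcob
  have := hmono _ hbase d (d + k) hd (by linarith)
  linarith

lemma admitsSlope_zero (hmono : MonotoneSnd t₀ g) (hS : BoundedCoboundary t₀ S g) :
    AdmitsSlope t₀ S g 0 := fun _ R =>
  ⟨max R t₀ + 1, by linarith, fun q hq _ => by
    simpa using neg_le_of_boundedCoboundary hmono hS (by linarith [le_max_right R t₀])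
      (by exact_mod_cast hq : (0 : ℝ) < q)⟩

/-- Take `j` minimising `g s₀ p - p * c` over `[0, M]` and split `g s₀ (j + q)` by the coboundary
bound. -/
lemma exists_slope_bound_of_window (hS : BoundedCoboundary t₀ S g) {s₀ c : ℝ} (hs₀ : t₀ < s₀)
    (M m : ℕ) (hwin : ∀ p : ℕ, M < p → p ≤ M + m → p * c ≤ g s₀ p) :
    ∃ j : ℕ, ∀ q : ℕ, 1 ≤ q → q ≤ m → q * c - S ≤ g (s₀ + j) q := by
  -- `φ 0 = 0` stands for `g s₀ 0`, where `g` is not meaningful.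
  set φ : ℕ → ℝ := fun p => if p = 0 then 0 else g s₀ p - p * c
  have hφ0 : φ 0 = 0 := if_pos rfl
  have hφ_pos : ∀ p, p ≠ 0 → φ p = g s₀ p - p * c := fun p hp => if_neg hp
  obtain ⟨j, hj⟩ := exists_forall_apply_le_apply_add φ M m fun p hMp hpm => by
    rw [hφ0, hφ_pos p (by omega)]
    linarith [hwin p hMp hpm]
  refine ⟨j, fun q hq hqm => ?_⟩
  have hjq := hj q hqm
  rw [hφ_pos (j + q) (by omega), Nat.cast_add] at hjq
  rcases Nat.eq_zero_or_pos j with rfl | hj0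
  · rw [hφ0] at hjq
    simp only [Nat.cast_zero, zero_add, add_zero] at hjq ⊢
    linarith [hS.nonneg]
  · rw [hφ_pos j hj0.ne'] at hjq
    have := hS.sub_le hs₀ (Nat.cast_pos.2 hj0) (by exact_mod_cast hq : (0 : ℝ) < q)
    linarith

lemma admitsSlope_of_lt_limsup (hmono : MonotoneSnd t₀ g) (hS : BoundedCoboundary t₀ S g)
    {c : ℝ} (hc : 0 ≤ c)
    (hcL : (c : EReal) < limsup (fun h : ℝ => limsup (fun s : ℝ => ((g s h / h : ℝ) : EReal))
      atTop) atTop) :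
    AdmitsSlope t₀ S g c := by
  intro m R
  obtain ⟨c', hcc', hc'L⟩ := EReal.lt_iff_exists_real_btwn.1 hcL
  have hcc' : c < c' := EReal.coe_lt_coe_iff.1 hcc'
  obtain ⟨h, hh_lim, hh_large⟩ := ((frequently_lt_of_lt_limsup (by isBoundedDefault)
    hc'L).and_eventually (eventually_ge_atTop (max 1 (m * c / (c' - c))))).exists
  have hh : 0 < h := by linarith [le_max_left 1 (m * c / (c' - c))]
  have hmc : m * c ≤ (c' - c) * h := by
    rw [max_le_iff, div_le_iff₀ (by linarith)] at hh_large
    linarith [hh_large.2]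
  obtain ⟨s₀, hs₀_big, hs₀_late⟩ := ((frequently_lt_of_lt_limsup (by isBoundedDefault)
    hh_lim).and_eventually (eventually_gt_atTop (max R t₀))).exists
  have hs₀ : c' * h < g s₀ h := by
    rw [EReal.coe_lt_coe_iff, lt_div_iff₀ hh] at hs₀_big
    linarith
  have hs₀t : t₀ < s₀ := (le_max_right _ _).trans_lt hs₀_late
  obtain ⟨j, hj⟩ := exists_slope_bound_of_window (c := c) hS hs₀t ⌊h⌋₊ m fun p hMp hpm => by
    have hhp : h < p := (Nat.floor_lt hh.le).1 hMp
    have hpm' : (p : ℝ) ≤ h + m := by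
      have : (p : ℝ) ≤ ⌊h⌋₊ + m := by exact_mod_cast hpm
      linarith [Nat.floor_le hh.le]
    have := hmono s₀ hs₀t h p hh hhp.le
    nlinarith [mul_le_mul_of_nonneg_right hpm' hc]
  exact ⟨s₀ + j, by linarith [(Nat.cast_nonneg j : (0 : ℝ) ≤ j)], hj⟩

lemma le_liminf_liminf_of_slope_bound (hmono : MonotoneSnd t₀ g) {tb u : ℕ → ℝ}
    (htb : ∀ n, t₀ < tb n) (hslope : ∀ n, ∀ q : ℕ, 1 ≤ q → q ≤ n → q * u n - S ≤ g (tb n) q)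
    {c : ℝ} (hc : 0 ≤ c) (hcu : ∀ᶠ n in atTop, c ≤ u n) :
    (c : EReal) ≤ liminf (fun h : ℝ =>
      liminf (fun n : ℕ => ((g (tb n) h / h : ℝ) : EReal)) atTop) atTop := by
  have hpoint : ∀ᶠ h : ℝ in atTop, ((((h - 1) * c - S) / h : ℝ) : EReal) ≤
      liminf (fun n : ℕ => ((g (tb n) h / h : ℝ) : EReal)) atTop := by
    filter_upwards [eventually_ge_atTop 1] with h hh
    refine le_liminf_of_le (by isBoundedDefault) ?_
    filter_upwards [hcu, eventually_ge_atTop ⌊h⌋₊] with n hcn hn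
    rw [EReal.coe_le_coe_iff]
    refine div_le_div_of_nonneg_right ?_ (by linarith)
    have hfloor : 1 ≤ ⌊h⌋₊ := Nat.le_floor (by simpa using hh)
    have hfloor_pos : (0 : ℝ) < ⌊h⌋₊ := by exact_mod_cast hfloor
    have hbound := hslope n ⌊h⌋₊ hfloor hn
    have hmono_h := hmono (tb n) (htb n) ⌊h⌋₊ h hfloor_pos (Nat.floor_le (by linarith))
    have hh_floor : h - 1 ≤ ⌊h⌋₊ := by linarith [Nat.lt_floor_add_one h]
    nlinarith [mul_le_mul_of_nonneg_right hh_floor hc, mul_le_mul_of_nonneg_left hcn hfloor_pos.le]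
  have hlim : Tendsto (fun h : ℝ => ((h - 1) * c - S) / h) atTop (𝓝 c) := by
    have : Tendsto (fun h : ℝ => c - (c + S) / h) atTop (𝓝 (c - 0)) :=
      tendsto_const_nhds.sub (tendsto_const_nhds.div_atTop tendsto_id)
    rw [sub_zero] at this
    refine this.congr' ?_
    filter_upwards [eventually_gt_atTop 0] with h hh
    field_simp
    ring
  calc (c : EReal) = liminf (fun h : ℝ => ((((h - 1) * c - S) / h : ℝ) : EReal)) atTop :=
        (EReal.tendsto_coe.2 hlim).liminf_eq.symm
    _ ≤ _ := liminf_le_liminf hpoint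

end Cocycle

theorem stmt18 (t₀ S : ℝ) (g : ℝ → ℝ → ℝ)
    (hmono : ∀ t > t₀, ∀ h₁ h₂ : ℝ, 0 < h₁ → h₁ ≤ h₂ → g t h₁ ≤ g t h₂)
    (hS : ∀ t > t₀, ∀ h > (0 : ℝ), ∀ k > (0 : ℝ),
      |g t (h + k) - g (t + h) k - g t h| ≤ S) :
    (∀ t : ℕ → ℝ, Tendsto t atTop atTop →
        limsup (fun h : ℝ =>
            limsup (fun n : ℕ => ((g (t n) h / h : ℝ) : EReal)) atTop) atTop ≤
          limsup (fun h : ℝ =>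
            limsup (fun s : ℝ => ((g s h / h : ℝ) : EReal)) atTop) atTop) ∧
      ∀ κ > (0 : ℝ), ∃ tb : ℕ → ℝ, Tendsto tb atTop atTop ∧
        limsup (fun h : ℝ =>
            limsup (fun s : ℝ => ((g s h / h : ℝ) : EReal)) atTop) atTop ≤
          liminf (fun h : ℝ =>
              liminf (fun n : ℕ => ((g (tb n) h / h : ℝ) : EReal)) atTop) atTop +
            ((2 * S / κ : ℝ) : EReal) := by
  refine ⟨fun t ht => limsup_le_limsup (.of_forall fun h =>
    ht.limsup_comp_le_limsup (u := fun s : ℝ => ((g s h / h : ℝ) : EReal))), fun κ hκ => ?_⟩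
  obtain ⟨u, hu, hu_ge⟩ := EReal.exists_seq_nonneg_eventually_ge
    (limsup (fun h : ℝ => limsup (fun s : ℝ => ((g s h / h : ℝ) : EReal)) atTop) atTop)
  have hslope : ∀ n, AdmitsSlope t₀ S g (u n) := fun n =>
    (hu n).2.elim (admitsSlope_of_lt_limsup hmono hS (hu n).1)
      fun hu0 => hu0 ▸ admitsSlope_zero hmono hS
  choose tb htb hbound using fun n => hslope n n n
  have htb₀ : ∀ n, t₀ < tb n := fun n => (le_max_right _ _).trans_lt (htb n)
  refine ⟨tb, tendsto_atTop_mono (fun n => (le_max_left _ _).trans (htb n).le)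
    tendsto_natCast_atTop_atTop, ?_⟩
  have hzero := le_liminf_liminf_of_slope_bound hmono htb₀ hbound le_rfl
    (.of_forall fun n => (hu n).1)
  refine le_add_of_le_of_nonneg (EReal.ge_of_forall_gt_iff_ge.1 fun z hz => ?_)
    (EReal.coe_nonneg.2 (div_nonneg (mul_nonneg zero_le_two (BoundedCoboundary.nonneg hS)) hκ.le))
  rcases le_or_gt 0 z with hz0 | hz0
  · exact le_liminf_liminf_of_slope_bound hmono htb₀ hbound hz0 (hu_ge z hz)
  · exact (EReal.coe_le_coe_iff.2 hz0.le).trans hzero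
end

section
/- Let X be a metric space and x ∈ X such that for all λ > 0, limsup_{r→0} n(λr, B̄(x,r)) < ∞, and assume the doubling-type homogeneity condition: there exist c ≥ 1 and a ∈ (0,1] such that for all r ≤ a, λ, μ ≤ 1 and y, z ∈ B(x,r), n(λμr, B(y,λr)) ≤ c · n(λμr, B(z,λr)). Then the lower and upper local box dimensions of X at x lie between the tangential dimensions: δ̲_X(x) ≤ d̲_X(x) ≤ d̄_X(x) ≤ δ̄_X(x). -/
/-!
Homogeneity says that all balls centred near `x` have, up to the factor `c`, the same covering
numbers at every relative scale, so covering numbers are roughly multiplicative across scales.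
If `N` balls of radius `λ r` cover `B(x, r)`, refining each of them like `B(x, 2λ r)` gives
`(c N)^k` balls of radius `(2λ)^k r`; conversely, a maximal separated set and a packing count show
that `n(λ^k R, B(x, R))` grows at least like `(N / c)^k` when every `B(x, r)` needs `N` balls of
radius `8 λ r`. Taking logarithms, the constants `c`, `2`, `8` cost `O(1 / log(1/λ))`, which
vanishes as `λ → 0`. The bound on `n(λ r, B̄(x, r))`, iterated in the same way, makes the small
balls around `x` totally bounded, so every covering number involved is finite and positive.
-/

open Metric Filter Topology

/-- Minimal cardinality of a finite family of open balls of radius `s` covering `E`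
(`0` by convention if no finite cover exists). -/
noncomputable def coverNum {X : Type*} [MetricSpace X] (s : ℝ) (E : Set X) : ℕ :=
  sInf {n : ℕ | ∃ F : Finset X, F.card = n ∧ E ⊆ ⋃ y ∈ F, ball y s}

/-- Lower tangential dimension of `X` at `x`. -/
noncomputable def lowerTD {X : Type*} [MetricSpace X] (x : X) : EReal :=
  liminf (fun l : ℝ => liminf (fun r : ℝ =>
      ((Real.log (coverNum (l * r) (ball x r)) / Real.log (1 / l) : ℝ) : EReal))
    (𝓝[>] (0 : ℝ))) (𝓝[>] (0 : ℝ))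

/-- Upper tangential dimension of `X` at `x`. -/
noncomputable def upperTD {X : Type*} [MetricSpace X] (x : X) : EReal :=
  limsup (fun l : ℝ => limsup (fun r : ℝ =>
      ((Real.log (coverNum (l * r) (ball x r)) / Real.log (1 / l) : ℝ) : EReal))
    (𝓝[>] (0 : ℝ))) (𝓝[>] (0 : ℝ))

/-- Lower local box dimension of `X` at `x`:
`lim_{R→0⁺} liminf_{r→0⁺} log n(r, B(x,R)) / log (1/r)` (the limit in `R` exists
by monotonicity, hence equals the `liminf`). -/
noncomputable def lowerLocalBoxDim {X : Type*} [MetricSpace X] (x : X) : EReal :=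
  liminf (fun R : ℝ => liminf (fun r : ℝ =>
      ((Real.log (coverNum r (ball x R)) / Real.log (1 / r) : ℝ) : EReal))
    (𝓝[>] (0 : ℝ))) (𝓝[>] (0 : ℝ))

/-- Upper local box dimension of `X` at `x`:
`lim_{R→0⁺} limsup_{r→0⁺} log n(r, B(x,R)) / log (1/r)` (the limit in `R` exists
by monotonicity, hence equals the `limsup`). -/
noncomputable def upperLocalBoxDim {X : Type*} [MetricSpace X] (x : X) : EReal :=
  limsup (fun R : ℝ => limsup (fun r : ℝ =>
      ((Real.log (coverNum r (ball x R)) / Real.log (1 / r) : ℝ) : EReal))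
    (𝓝[>] (0 : ℝ))) (𝓝[>] (0 : ℝ))

section Covering

open Set Finset

variable {X : Type*} [MetricSpace X] {s s' : ℝ} {E : Set X}

lemma coverNum_le_card {F : Finset X} (h : E ⊆ ⋃ y ∈ F, ball y s) : coverNum s E ≤ F.card :=
  Nat.sInf_le ⟨F, rfl, h⟩

lemma exists_card_eq_coverNum (h : ∃ F : Finset X, E ⊆ ⋃ y ∈ F, ball y s) :
    ∃ F : Finset X, F.card = coverNum s E ∧ E ⊆ ⋃ y ∈ F, ball y s := by
  obtain ⟨F, hF⟩ := h
  exact Nat.sInf_mem (s := {n | ∃ F : Finset X, F.card = n ∧ E ⊆ ⋃ y ∈ F, ball y s})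
    ⟨F.card, F, rfl, hF⟩

lemma exists_cover_of_coverNum_pos (h : 0 < coverNum s E) :
    ∃ F : Finset X, E ⊆ ⋃ y ∈ F, ball y s := by
  by_contra! hE
  simp [coverNum, hE] at h

lemma coverNum_pos (hE : E.Nonempty) (h : ∃ F : Finset X, E ⊆ ⋃ y ∈ F, ball y s) :
    0 < coverNum s E := by
  obtain ⟨F, hF, hcov⟩ := exists_card_eq_coverNum h
  obtain ⟨e, he⟩ := hE
  obtain ⟨y, hy, -⟩ := mem_iUnion₂.1 (hcov he)
  exact hF ▸ Finset.card_pos.2 ⟨y, hy⟩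

lemma coverNum_anti (hss' : s ≤ s') (h : ∃ F : Finset X, E ⊆ ⋃ y ∈ F, ball y s) :
    coverNum s' E ≤ coverNum s E := by
  obtain ⟨F, hF, hcov⟩ := exists_card_eq_coverNum h
  exact hF ▸ coverNum_le_card (hcov.trans (iUnion₂_mono fun y _ => ball_subset_ball hss'))

lemma TotallyBounded.exists_finset_cover_ball (hE : TotallyBounded E) (hs : 0 < s) :
    ∃ F : Finset X, E ⊆ ⋃ y ∈ F, ball y s := by
  obtain ⟨t, ht, hcov⟩ := Metric.totallyBounded_iff.1 hE s hs
  exact ⟨ht.toFinset, by simpa using hcov⟩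

/-- Sets at mutual distance `≥ 2 s` use disjoint parts of any cover by `s`-balls. -/
lemma sum_coverNum_le_card {ι : Type*} {T : Finset ι} {E : ι → Set X} {F : Finset X}
    (hcov : ∀ i ∈ T, E i ⊆ ⋃ y ∈ F, ball y s)
    (hfar : ∀ i ∈ T, ∀ j ∈ T, i ≠ j → ∀ u ∈ E i, ∀ v ∈ E j, 2 * s ≤ dist u v) :
    ∑ i ∈ T, coverNum s (E i) ≤ F.card := by
  classical
  set A : ι → Finset X := fun i => F.filter fun y => (ball y s ∩ E i).Nonempty
  have hA : ∀ i ∈ T, coverNum s (E i) ≤ (A i).card := fun i hi => coverNum_le_card fun u hu => by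
    obtain ⟨y, hy, huy⟩ := mem_iUnion₂.1 (hcov i hi hu)
    exact mem_iUnion₂.2 ⟨y, mem_filter.2 ⟨hy, u, huy, hu⟩, huy⟩
  have hdisj : (T : Set ι).PairwiseDisjoint A := by
    intro i hi j hj hij
    refine Finset.disjoint_left.2 fun y hyi hyj => ?_
    obtain ⟨u, huy, hu⟩ := (mem_filter.1 hyi).2
    obtain ⟨v, hvy, hv⟩ := (mem_filter.1 hyj).2
    linarith [hfar i hi j hj hij u hu v hv, dist_triangle_right u v y, mem_ball.1 huy,
      mem_ball.1 hvy]
  calc ∑ i ∈ T, coverNum s (E i) ≤ ∑ i ∈ T, (A i).card := sum_le_sum hA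
    _ = (T.biUnion A).card := (card_biUnion hdisj).symm
    _ ≤ F.card := card_le_card (biUnion_subset.2 fun i _ => filter_subset _ _)

lemma card_le_card_of_separated {T F : Finset X} {δ : ℝ}
    (hsep : (T : Set X).Pairwise fun p q => δ ≤ dist p q)
    (hcov : (T : Set X) ⊆ ⋃ y ∈ F, ball y s) (hsδ : 2 * s ≤ δ) : T.card ≤ F.card := by
  have hcov' : ∀ p ∈ T, ({p} : Set X) ⊆ ⋃ y ∈ F, ball y s := fun p hp =>
    singleton_subset_iff.2 (hcov hp)
  calc T.card = ∑ p ∈ T, 1 := card_eq_sum_ones T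
    _ ≤ ∑ p ∈ T, coverNum s ({p} : Set X) :=
      sum_le_sum fun p hp => coverNum_pos (singleton_nonempty p) ⟨F, hcov' p hp⟩
    _ ≤ F.card := sum_coverNum_le_card hcov' fun p hp q hq hpq u hu v hv => by
      rw [mem_singleton_iff.1 hu, mem_singleton_iff.1 hv]
      exact hsδ.trans (hsep hp hq hpq)

/-- A maximal `δ`-separated subset of `E`; it is finite because every `δ`-separated subset is at
most as large as a cover by `δ/2`-balls. -/
lemma exists_separated_finset_cover {F : Finset X} {δ : ℝ} (hcov : E ⊆ ⋃ y ∈ F, ball y s)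
    (hsδ : 2 * s ≤ δ) :
    ∃ T : Finset X, ↑T ⊆ E ∧ (T : Set X).Pairwise (fun p q => δ ≤ dist p q) ∧
      E ⊆ ⋃ p ∈ T, ball p δ := by
  classical
  set S : Set ℕ := {n | ∃ T : Finset X, T.card = n ∧ ↑T ⊆ E ∧
    (T : Set X).Pairwise fun p q => δ ≤ dist p q}
  have hbdd : BddAbove S := ⟨F.card, by
    rintro _ ⟨T, rfl, hTE, hT⟩
    exact card_le_card_of_separated hT (hTE.trans hcov) hsδ⟩
  obtain ⟨T, hTcard, hTE, hT⟩ : sSup S ∈ S := Nat.sSup_mem ⟨0, ∅, rfl, by simp, by simp⟩ hbdd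
  refine ⟨T, hTE, hT, fun y hy => ?_⟩
  by_contra hyT
  have hfar : ∀ p ∈ T, δ ≤ dist y p := fun p hp =>
    not_lt.1 fun h => hyT (mem_iUnion₂.2 ⟨p, hp, h⟩)
  have hδ : 0 < δ := by
    obtain ⟨w, -, hw⟩ := mem_iUnion₂.1 (hcov hy)
    linarith [dist_nonneg (x := y) (y := w), mem_ball.1 hw]
  have hy' : y ∉ T := fun h => by linarith [hfar y h, dist_self y]
  have hmax := le_csSup hbdd ⟨insert y T, rfl, by simpa [insert_subset_iff] using ⟨hy, hTE⟩, by
    rw [coe_insert, Set.pairwise_insert]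
    exact ⟨hT, fun p hp _ => ⟨hfar p hp, dist_comm p y ▸ hfar p hp⟩⟩⟩
  rw [card_insert_of_notMem hy', ← hTcard] at hmax
  omega

lemma exists_cover_of_forall_exists_cover {ι : Type*} {E : Set X} {S : ι → Set X} {G : Finset ι}
    {s D : ℝ} (hG : E ⊆ ⋃ i ∈ G, S i)
    (h : ∀ i ∈ G, ∃ F : Finset X, (F.card : ℝ) ≤ D ∧ S i ∩ E ⊆ ⋃ y ∈ F, ball y s) :
    ∃ F : Finset X, (F.card : ℝ) ≤ G.card * D ∧ E ⊆ ⋃ y ∈ F, ball y s := by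
  classical
  choose! F hFcard hFcov using h
  refine ⟨G.biUnion F, ?_, fun u hu => ?_⟩
  · calc ((G.biUnion F).card : ℝ) ≤ ∑ i ∈ G, ((F i).card : ℝ) := by
          exact_mod_cast card_biUnion_le
      _ ≤ ∑ _i ∈ G, D := sum_le_sum hFcard
      _ = G.card * D := by rw [sum_const, nsmul_eq_mul]
  · obtain ⟨i, hi, hui⟩ := mem_iUnion₂.1 (hG hu)
    obtain ⟨y, hy, huy⟩ := mem_iUnion₂.1 (hFcov i hi ⟨hui, hu⟩)
    exact mem_iUnion₂.2 ⟨y, mem_biUnion.2 ⟨i, hi, hy⟩, huy⟩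

end Covering

section Asymptotics

lemma exists_forall_Ioc_of_eventually_nhdsGT {p : ℝ → Prop} (h : ∀ᶠ r in 𝓝[>] (0 : ℝ), p r)
    {a : ℝ} (ha : 0 < a) : ∃ r₀, 0 < r₀ ∧ r₀ ≤ a ∧ ∀ r, 0 < r → r ≤ r₀ → p r := by
  obtain ⟨u, hu, hsub⟩ := mem_nhdsGT_iff_exists_Ioc_subset.1 h
  exact ⟨min u a, lt_min hu ha, min_le_right _ _,
    fun r hr hru => hsub ⟨hr, hru.trans (min_le_left _ _)⟩⟩

lemma eventually_lt_mul_log_one_div {α : ℝ} (β : ℝ) (hα : 0 < α) :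
    ∀ᶠ ν in 𝓝[>] (0 : ℝ), β < α * Real.log (1 / ν) := by
  have h : Tendsto (fun ν : ℝ => Real.log (1 / ν)) (𝓝[>] 0) atTop := by
    simp only [one_div, Real.log_inv]
    exact tendsto_neg_atBot_atTop.comp Real.tendsto_log_nhdsGT_zero
  exact (h.const_mul_atTop hα).eventually_gt_atTop β

lemma log_pow_mul {σ R : ℝ} (hσ : 0 < σ) (hR : 0 < R) (k : ℕ) :
    Real.log (σ ^ k * R) = Real.log R - k * Real.log (1 / σ) := by
  rw [Real.log_mul (pow_pos hσ k).ne' hR.ne', Real.log_pow, one_div, Real.log_inv]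
  ring

lemma eventually_exists_pow_mul_lt_le {σ R : ℝ} (hσ0 : 0 < σ) (hσ1 : σ < 1) (hR : 0 < R)
    (k₀ : ℕ) : ∀ᶠ s in 𝓝[>] (0 : ℝ), ∃ k, k₀ ≤ k ∧ σ ^ (k + 1) * R < s ∧ s ≤ σ ^ k * R := by
  filter_upwards [Ioo_mem_nhdsGT (show 0 < σ ^ k₀ * R by positivity)] with s ⟨hs, hsk₀⟩
  have hσk₀ : σ ^ k₀ ≤ 1 := pow_le_one₀ hσ0.le hσ1.le
  obtain ⟨k, hk1, hk2⟩ := exists_nat_pow_near_of_lt_one (div_pos hs hR)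
    ((div_le_one hR).2 (by nlinarith)) hσ0 hσ1
  rw [lt_div_iff₀ hR] at hk1
  rw [div_le_iff₀ hR] at hk2
  refine ⟨k, ?_, hk1, hk2⟩
  have := (pow_lt_pow_iff_right_of_lt_one₀ hσ0 hσ1).1
    (lt_of_mul_lt_mul_right (hk1.trans hsk₀) hR.le)
  omega

lemma eventually_log_div_log_le {n : ℝ → ℕ} {σ R N t : ℝ} (hσ0 : 0 < σ) (hσ1 : σ < 1)
    (hR : 0 < R) (hN : 1 ≤ N) (hn : ∀ (k : ℕ) (s : ℝ), σ ^ k * R ≤ s → (n s : ℝ) ≤ N ^ k)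
    (ht : Real.log N < t * Real.log (1 / σ)) :
    ∀ᶠ s in 𝓝[>] (0 : ℝ), Real.log (n s) / Real.log (1 / s) ≤ t := by
  set M := Real.log (1 / σ)
  have hM : 0 < M := Real.log_pos ((one_lt_div hσ0).2 hσ1)
  have hlogN : 0 ≤ Real.log N := Real.log_nonneg hN
  have ht0 : 0 ≤ t := by nlinarith
  obtain ⟨k₀, hk₀⟩ := exists_nat_gt ((Real.log N + t * Real.log R) / (t * M - Real.log N))
  filter_upwards [eventually_exists_pow_mul_lt_le hσ0 hσ1 hR k₀, Ioo_mem_nhdsGT one_pos]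
    with s ⟨k, hk, hsk1, hsk⟩ ⟨hs0, hs1⟩
  have hlog_s : k * M - Real.log R ≤ Real.log (1 / s) := by
    rw [one_div, Real.log_inv]
    linarith [Real.log_le_log hs0 hsk, log_pow_mul hσ0 hR k]
  have hlog_n : Real.log (n s) ≤ (k + 1) * Real.log N := by
    rcases (n s).eq_zero_or_pos with h0 | hpos
    · rw [h0, Nat.cast_zero, Real.log_zero]
      positivity
    · calc Real.log (n s) ≤ Real.log (N ^ (k + 1)) :=
            Real.log_le_log (by exact_mod_cast hpos) (hn (k + 1) s hsk1.le)
        _ = (k + 1) * Real.log N := by rw [Real.log_pow]; push_cast; ring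
  have hk' : Real.log N + t * Real.log R < k * (t * M - Real.log N) :=
    (div_lt_iff₀ (sub_pos.2 ht)).1 (hk₀.trans_le (by exact_mod_cast hk))
  rw [div_le_iff₀ (Real.log_pos ((one_lt_div hs0).2 hs1))]
  nlinarith [mul_le_mul_of_nonneg_left hlog_s ht0]

lemma eventually_le_log_div_log {n : ℝ → ℕ} {σ R N t : ℝ} (hσ0 : 0 < σ) (hσ1 : σ < 1)
    (hR : 0 < R) (hN : 0 < N) (hn : ∀ (k : ℕ) (s : ℝ), 0 < s → s ≤ σ ^ k * R → N ^ k ≤ n s)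
    (ht : t * Real.log (1 / σ) < Real.log N) :
    ∀ᶠ s in 𝓝[>] (0 : ℝ), t ≤ Real.log (n s) / Real.log (1 / s) := by
  set M := Real.log (1 / σ)
  obtain ⟨k₀, hk₀⟩ := exists_nat_gt (t * (M - Real.log R) / (Real.log N - t * M))
  filter_upwards [eventually_exists_pow_mul_lt_le hσ0 hσ1 hR k₀, Ioo_mem_nhdsGT one_pos]
    with s ⟨k, hk, hsk1, hsk⟩ ⟨hs0, hs1⟩
  have hlog_s : Real.log (1 / s) ≤ (k + 1) * M - Real.log R := by
    rw [one_div, Real.log_inv]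
    have := log_pow_mul hσ0 hR (k + 1)
    push_cast at this
    linarith [Real.log_le_log (by positivity) hsk1.le]
  have hlog_n : k * Real.log N ≤ Real.log (n s) := by
    rw [← Real.log_pow]
    exact Real.log_le_log (by positivity) (hn k s hs0 hsk)
  rw [le_div_iff₀ (Real.log_pos ((one_lt_div hs0).2 hs1))]
  rcases le_or_gt t 0 with ht0 | ht0
  · nlinarith [Real.log_natCast_nonneg (n s), Real.log_pos ((one_lt_div hs0).2 hs1)]
  · have hk' : t * (M - Real.log R) < k * (Real.log N - t * M) :=
      (div_lt_iff₀ (sub_pos.2 ht)).1 (hk₀.trans_le (by exact_mod_cast hk))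
    nlinarith [mul_le_mul_of_nonneg_left hlog_s ht0.le]

end Asymptotics

section Homogeneity

open Set Finset

variable {X : Type*} [MetricSpace X]

def HomogeneousAt (x : X) (c a : ℝ) : Prop :=
  ∀ r : ℝ, 0 < r → r ≤ a → ∀ l m : ℝ, 0 < l → l ≤ 1 → 0 < m → m ≤ 1 →
    ∀ y ∈ ball x r, ∀ z ∈ ball x r,
      (coverNum (l * m * r) (ball y (l * r)) : ℝ) ≤ c * (coverNum (l * m * r) (ball z (l * r)) : ℝ)

namespace HomogeneousAt

variable {x : X} {c a : ℝ}

lemma exists_cover_card_le (hhom : HomogeneousAt x c a) (hc : 0 ≤ c) {r l m : ℝ} (hr : 0 < r)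
    (hra : r ≤ a) (hl : 0 < l) (hl1 : l ≤ 1) (hm : 0 < m) (hm1 : m ≤ 1) {y z : X}
    (hy : y ∈ ball x r) (hz : z ∈ ball x r) {F : Finset X}
    (hF : ball z (l * r) ⊆ ⋃ w ∈ F, ball w (l * m * r)) :
    ∃ F' : Finset X, (F'.card : ℝ) ≤ c * F.card ∧
      ball y (l * r) ⊆ ⋃ w ∈ F', ball w (l * m * r) := by
  have hz_pos : 0 < coverNum (l * m * r) (ball z (l * r)) :=
    coverNum_pos ⟨z, mem_ball_self (by positivity)⟩ ⟨F, hF⟩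
  -- `ball y` is coverable too, since the reverse comparison bounds its cover number from below
  have hy_pos : 0 < coverNum (l * m * r) (ball y (l * r)) := by
    have := hhom r hr hra l m hl hl1 hm hm1 z hz y hy
    by_contra! h0
    rw [Nat.le_zero.1 h0, Nat.cast_zero, mul_zero] at this
    have : (0 : ℝ) < coverNum (l * m * r) (ball z (l * r)) := by exact_mod_cast hz_pos
    linarith
  obtain ⟨F', hF', hcov⟩ := exists_card_eq_coverNum (exists_cover_of_coverNum_pos hy_pos)
  refine ⟨F', ?_, hcov⟩
  calc (F'.card : ℝ) = coverNum (l * m * r) (ball y (l * r)) := by rw [hF']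
    _ ≤ c * coverNum (l * m * r) (ball z (l * r)) := hhom r hr hra l m hl hl1 hm hm1 y hy z hz
    _ ≤ c * F.card := by gcongr; exact_mod_cast coverNum_le_card hF

/-- Each step refines a cover by `ν r`-balls: the part of each ball inside `ball x r` lies in a
`2 ν r`-ball centred in `ball x r`, which homogeneity lets us cover like `ball x (2 ν r)`. -/
lemma exists_cover_pow (hhom : HomogeneousAt x c a) (hc : 0 ≤ c) {ν r₀ B : ℝ} (hν : 0 < ν)
    (hν2 : 2 * ν ≤ 1) (hr₀a : r₀ ≤ a)
    (H : ∀ r, 0 < r → r ≤ r₀ →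
      ∃ F : Finset X, (F.card : ℝ) ≤ B ∧ ball x r ⊆ ⋃ y ∈ F, ball y (ν * r))
    (k : ℕ) {r : ℝ} (hr : 0 < r) (hrr₀ : r ≤ r₀) :
    ∃ F : Finset X, (F.card : ℝ) ≤ (c * B) ^ k ∧ ball x r ⊆ ⋃ y ∈ F, ball y ((2 * ν) ^ k * r) := by
  induction k generalizing r with
  | zero => exact ⟨{x}, by simp, by simp⟩
  | succ k ih =>
    obtain ⟨G, hGB, hG⟩ := H r hr hrr₀
    have hB : 0 ≤ B := (Nat.cast_nonneg _).trans hGB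
    obtain ⟨F, hF, hFcov⟩ := exists_cover_of_forall_exists_cover
      (s := (2 * ν) ^ (k + 1) * r) (D := c * (c * B) ^ k) hG
      fun z _ => by
        rcases (ball z (ν * r) ∩ ball x r).eq_empty_or_nonempty with he | ⟨w, hwz, hwx⟩
        · exact ⟨∅, by rw [Finset.card_empty, Nat.cast_zero]; positivity, by simp [he]⟩
        obtain ⟨F, hF, hcov⟩ := ih (r := 2 * ν * r) (by positivity) (by nlinarith)
        rw [show (2 * ν) ^ k * (2 * ν * r) = 2 * ν * (2 * ν) ^ k * r by ring] at hcov
        obtain ⟨F', hF', hcov'⟩ := hhom.exists_cover_card_le hc hr (hrr₀.trans hr₀a)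
          (by positivity) hν2 (by positivity) (pow_le_one₀ (by positivity) hν2) hwx
          (mem_ball_self hr) hcov
        refine ⟨F', hF'.trans (by gcongr), fun u hu => ?_⟩
        rw [show (2 * ν) ^ (k + 1) * r = 2 * ν * (2 * ν) ^ k * r by ring]
        refine hcov' (mem_ball.2 ?_)
        linarith [dist_triangle u z w, mem_ball.1 hu.1, mem_ball'.1 hwz]
    refine ⟨F, hF.trans ?_, hFcov⟩
    calc (G.card : ℝ) * (c * (c * B) ^ k) ≤ B * (c * (c * B) ^ k) := by gcongr
      _ = (c * B) ^ (k + 1) := by ring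

lemma eventually_totallyBounded_ball (hhom : HomogeneousAt x c a) (hc : 0 ≤ c) (ha : 0 < a)
    {ν : ℝ} (hν : 0 < ν) (hν2 : 2 * ν < 1)
    (hfin : ∃ C : ℕ, ∀ᶠ r in 𝓝[>] (0 : ℝ),
      ∃ F : Finset X, F.card ≤ C ∧ closedBall x r ⊆ ⋃ y ∈ F, ball y (ν * r)) :
    ∀ᶠ R in 𝓝[>] (0 : ℝ), TotallyBounded (ball x R) := by
  obtain ⟨C, hC⟩ := hfin
  obtain ⟨r₀, hr₀, hr₀a, H⟩ := exists_forall_Ioc_of_eventually_nhdsGT hC ha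
  filter_upwards [Ioc_mem_nhdsGT hr₀] with R ⟨hR, hRr₀⟩
  refine Metric.totallyBounded_iff.2 fun ε hε => ?_
  obtain ⟨k, hk⟩ := exists_pow_lt_of_lt_one (div_pos hε hR) hν2
  obtain ⟨F, -, hF⟩ := hhom.exists_cover_pow hc hν hν2.le hr₀a (B := C)
    (fun r hr hrr₀ => by
      obtain ⟨F, hF, hcov⟩ := H r hr hrr₀
      exact ⟨F, by exact_mod_cast hF, ball_subset_closedBall.trans hcov⟩) k hR hRr₀
  refine ⟨F, F.finite_toSet, hF.trans (iUnion₂_mono fun y _ => ball_subset_ball ?_)⟩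
  exact ((lt_div_iff₀ hR).1 hk).le

/-- Packing estimate: a maximal `ρ`-separated set `T` in `ball x (r/2)` has at least
`coverNum ρ (ball x (r/2))` points, and the disjoint balls `ball p (ρ/4)`, `p ∈ T`, each need
about as many `s`-balls as `ball x (ρ/4)`. -/
lemma coverNum_mul_coverNum_le (hhom : HomogeneousAt x c a) (hc : 0 ≤ c) {r ρ s : ℝ}
    (hr : 0 < r) (hra : r ≤ a) (hρr : ρ ≤ 2 * r) (hs : 0 < s) (hsρ : 4 * s ≤ ρ)
    (hcov : ∃ F : Finset X, ball x r ⊆ ⋃ y ∈ F, ball y s) :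
    (coverNum ρ (ball x (r / 2)) : ℝ) * coverNum s (ball x (ρ / 4)) ≤
      c * coverNum s (ball x r) := by
  have hρ : 0 < ρ := by linarith
  obtain ⟨F, hF, hFcov⟩ := exists_card_eq_coverNum hcov
  obtain ⟨T, hTE, hTsep, hTcov⟩ := exists_separated_finset_cover (E := ball x (r / 2))
    ((ball_subset_ball (by linarith)).trans hFcov) (show 2 * s ≤ ρ by linarith)
  have hcomp : ∀ p ∈ T,
      (coverNum s (ball x (ρ / 4)) : ℝ) ≤ c * coverNum s (ball p (ρ / 4)) := by
    intro p hp
    have := hhom r hr hra (ρ / (4 * r)) (4 * s / ρ) (by positivity)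
      ((div_le_one (by positivity)).2 (by linarith)) (by positivity)
      ((div_le_one hρ).2 hsρ) x (mem_ball_self hr) p (ball_subset_ball (by linarith) (hTE hp))
    rwa [show ρ / (4 * r) * r = ρ / 4 by field_simp,
      show ρ / (4 * r) * (4 * s / ρ) * r = s by field_simp] at this
  have hsum : ∑ p ∈ T, coverNum s (ball p (ρ / 4)) ≤ F.card := by
    refine sum_coverNum_le_card (fun p hp => (ball_subset_ball' ?_).trans hFcov)
      fun p hp q hq hpq u hu v hv => ?_
    · linarith [mem_ball.1 (hTE hp)]
    · linarith [hTsep hp hq hpq, dist_triangle4 p u v q, mem_ball'.1 hu, mem_ball.1 hv]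
  calc (coverNum ρ (ball x (r / 2)) : ℝ) * coverNum s (ball x (ρ / 4))
      ≤ T.card * coverNum s (ball x (ρ / 4)) := by
        gcongr; exact_mod_cast coverNum_le_card hTcov
    _ = ∑ _p ∈ T, (coverNum s (ball x (ρ / 4)) : ℝ) := by rw [sum_const, nsmul_eq_mul]
    _ ≤ ∑ p ∈ T, c * (coverNum s (ball p (ρ / 4)) : ℝ) := sum_le_sum hcomp
    _ ≤ c * F.card := by rw [← mul_sum]; gcongr; exact_mod_cast hsum
    _ = c * coverNum s (ball x r) := by rw [hF]

lemma pow_le_coverNum (hhom : HomogeneousAt x c a) (hc : 0 < c) {ν R₀ P : ℝ} (hν : 0 < ν)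
    (hν8 : 8 * ν ≤ 1) (hR₀a : R₀ ≤ a) (hP : 0 < P)
    (hTB : ∀ R, 0 < R → R ≤ R₀ → TotallyBounded (ball x R))
    (hPn : ∀ r, 0 < r → r ≤ R₀ → P ≤ coverNum (8 * ν * r) (ball x r))
    (k : ℕ) {R : ℝ} (hR : 0 < R) (hRR₀ : R ≤ R₀) :
    (P / c) ^ k ≤ coverNum (ν ^ k * R) (ball x R) := by
  induction k generalizing R with
  | zero =>
    rw [pow_zero, pow_zero, one_mul, Nat.one_le_cast]
    exact coverNum_pos ⟨x, mem_ball_self hR⟩ ((hTB R hR hRR₀).exists_finset_cover_ball hR)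
  | succ k ih =>
    have hνk : ν ^ k ≤ 1 := pow_le_one₀ hν.le (by linarith)
    have hpack := hhom.coverNum_mul_coverNum_le hc.le hR (hRR₀.trans hR₀a)
      (ρ := ν ^ k * (R / 2)) (s := ν ^ (k + 1) * R) (by nlinarith) (by positivity)
      (by nlinarith [pow_succ ν k, mul_le_mul_of_nonneg_left hν8 (mul_pos (pow_pos hν k) hR).le])
      ((hTB R hR hRR₀).exists_finset_cover_ball (by positivity))
    have hfine := hPn (ν ^ k * (R / 2) / 4) (by positivity) (by nlinarith)
    rw [show 8 * ν * (ν ^ k * (R / 2) / 4) = ν ^ (k + 1) * R by ring] at hfine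
    have hcoarse := ih (R := R / 2) (by positivity) (by linarith)
    calc (P / c) ^ (k + 1) = (P / c) ^ k * P / c := by ring
      _ ≤ coverNum (ν ^ k * (R / 2)) (ball x (R / 2)) *
          coverNum (ν ^ (k + 1) * R) (ball x (ν ^ k * (R / 2) / 4)) / c := by gcongr
      _ ≤ coverNum (ν ^ (k + 1) * R) (ball x R) := by rw [div_le_iff₀ hc]; linarith

end HomogeneousAt

end Homogeneity

section Dimensions

variable {X : Type*} [MetricSpace X] {x : X} {c a : ℝ}

/-- The dimension bound obtained, `(log c + t log(1/ν)) / log(1/(2ν))`, tends to `t` as `ν → 0`. -/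
theorem upperLocalBoxDim_le_of_upperTD_lt (hhom : HomogeneousAt x c a) (hc : 1 ≤ c)
    (ha : 0 < a) (hTB : ∀ᶠ R in 𝓝[>] (0 : ℝ), TotallyBounded (ball x R)) {t t' : ℝ}
    (ht : upperTD x < t) (htt' : t < t') : upperLocalBoxDim x ≤ t' := by
  obtain ⟨ν, hνt, hνlin, hν0, hν1⟩ := ((eventually_lt_of_limsup_lt ht).and
    ((eventually_lt_mul_log_one_div (Real.log c + t' * Real.log 2) (sub_pos.2 htt')).and
      (Ioo_mem_nhdsGT (show (0 : ℝ) < 1 / 2 by norm_num)))).exists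
  set L := Real.log (1 / ν)
  have hL : 0 < L := Real.log_pos ((one_lt_div hν0).2 (by linarith))
  set B := Real.exp (t * L)
  obtain ⟨r₀, hr₀, hr₀a, hr₀H⟩ :=
    exists_forall_Ioc_of_eventually_nhdsGT ((eventually_lt_of_limsup_lt hνt).and hTB) ha
  have H : ∀ r, 0 < r → r ≤ r₀ →
      ∃ F : Finset X, (F.card : ℝ) ≤ B ∧ ball x r ⊆ ⋃ y ∈ F, ball y (ν * r) := by
    intro r hr hrr₀
    obtain ⟨hlt, hTBr⟩ := hr₀H r hr hrr₀
    have hcov := hTBr.exists_finset_cover_ball (by positivity : 0 < ν * r)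
    obtain ⟨F, hF, hFcov⟩ := exists_card_eq_coverNum hcov
    have hpos : (0 : ℝ) < coverNum (ν * r) (ball x r) := by
      exact_mod_cast coverNum_pos ⟨x, mem_ball_self hr⟩ hcov
    refine ⟨F, hF ▸ ?_, hFcov⟩
    exact ((Real.log_lt_iff_lt_exp hpos).1 ((div_lt_iff₀ hL).1 (EReal.coe_lt_coe_iff.1 hlt))).le
  have hB : 1 ≤ B := by
    obtain ⟨F, hF, hcov⟩ := H r₀ hr₀ le_rfl
    have := (coverNum_pos ⟨x, mem_ball_self hr₀⟩ ⟨F, hcov⟩).trans_le (coverNum_le_card hcov)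
    exact le_trans (by exact_mod_cast this) hF
  have hσ : 2 * ν < 1 := by linarith
  refine limsup_le_of_le (by isBoundedDefault) ?_
  filter_upwards [Ioo_mem_nhdsGT hr₀] with R ⟨hR, hRr₀⟩
  refine limsup_le_of_le (by isBoundedDefault) ?_
  have hn : ∀ (k : ℕ) (s : ℝ), (2 * ν) ^ k * R ≤ s → (coverNum s (ball x R) : ℝ) ≤ (c * B) ^ k := by
    intro k s hs
    obtain ⟨F, hF, hcov⟩ := hhom.exists_cover_pow (by linarith) hν0 hσ.le hr₀a H k hR hRr₀.le
    exact (Nat.cast_le.2 (coverNum_le_card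
      (hcov.trans (Set.iUnion₂_mono fun y _ => ball_subset_ball hs)))).trans hF
  have hexp : Real.log (c * B) < t' * Real.log (1 / (2 * ν)) := by
    rw [Real.log_mul (by positivity) (by positivity), Real.log_exp,
      show 1 / (2 * ν) = 1 / ν / 2 by ring, Real.log_div (by positivity) two_ne_zero]
    linarith
  filter_upwards [eventually_log_div_log_le (by positivity) hσ hR
    (one_le_mul_of_one_le_of_one_le hc hB) hn hexp] with s hs
  exact_mod_cast hs

/-- Here `(P/c)^k ≤ n((l/8)^k R, B(x, R))` with `P = l^{-t}`; the dimension bound obtained,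
`(t log(1/l) - log c) / log(8/l)`, tends to `t` as `l → 0`. -/
theorem le_lowerLocalBoxDim_of_lt_lowerTD (hhom : HomogeneousAt x c a) (hc : 0 < c)
    (ha : 0 < a) (hTB : ∀ᶠ R in 𝓝[>] (0 : ℝ), TotallyBounded (ball x R)) {t t' : ℝ}
    (ht : (t : EReal) < lowerTD x) (ht't : t' < t) : (t' : EReal) ≤ lowerLocalBoxDim x := by
  obtain ⟨l, hlt, hllin, hl0, hl1⟩ := ((eventually_lt_of_lt_liminf ht).and
    ((eventually_lt_mul_log_one_div (t' * Real.log 8 + Real.log c) (sub_pos.2 ht't)).and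
      (Ioo_mem_nhdsGT (show (0 : ℝ) < 1 by norm_num)))).exists
  set L := Real.log (1 / l)
  have hL : 0 < L := Real.log_pos ((one_lt_div hl0).2 hl1)
  set P := Real.exp (t * L)
  obtain ⟨r₀, hr₀, hr₀a, hr₀H⟩ :=
    exists_forall_Ioc_of_eventually_nhdsGT ((eventually_lt_of_lt_liminf hlt).and hTB) ha
  have hPn : ∀ r, 0 < r → r ≤ r₀ → P ≤ coverNum (8 * (l / 8) * r) (ball x r) := by
    intro r hr hrr₀
    obtain ⟨hlt, hTBr⟩ := hr₀H r hr hrr₀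
    rw [show 8 * (l / 8) = l by ring]
    have hpos : (0 : ℝ) < coverNum (l * r) (ball x r) := by
      exact_mod_cast coverNum_pos ⟨x, mem_ball_self hr⟩
        (hTBr.exists_finset_cover_ball (by positivity))
    exact ((Real.lt_log_iff_exp_lt hpos).1 ((lt_div_iff₀ hL).1 (EReal.coe_lt_coe_iff.1 hlt))).le
  refine le_liminf_of_le (by isBoundedDefault) ?_
  filter_upwards [Ioo_mem_nhdsGT hr₀] with R ⟨hR, hRr₀⟩
  refine le_liminf_of_le (by isBoundedDefault) ?_
  have hTBR := (hr₀H R hR hRr₀.le).2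
  have hn : ∀ (k : ℕ) (s : ℝ), 0 < s → s ≤ (l / 8) ^ k * R →
      (P / c) ^ k ≤ (coverNum s (ball x R) : ℝ) := by
    intro k s hs hsk
    refine (hhom.pow_le_coverNum hc (by positivity) (by linarith) hr₀a (Real.exp_pos _)
      (fun R hR hRr₀ => (hr₀H R hR hRr₀).2) hPn k hR hRr₀.le).trans ?_
    exact_mod_cast coverNum_anti hsk (hTBR.exists_finset_cover_ball hs)
  have hexp : t' * Real.log (1 / (l / 8)) < Real.log (P / c) := by
    rw [Real.log_div (Real.exp_pos _).ne' hc.ne', Real.log_exp,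
      show 1 / (l / 8) = 8 * (1 / l) by ring, Real.log_mul (by norm_num) (by positivity)]
    linarith
  filter_upwards [eventually_le_log_div_log (by positivity) (by linarith) hR (by positivity)
    hn hexp] with s hs
  exact_mod_cast hs

theorem lowerTD_le_lowerLocalBoxDim (hhom : HomogeneousAt x c a) (hc : 0 < c) (ha : 0 < a)
    (hTB : ∀ᶠ R in 𝓝[>] (0 : ℝ), TotallyBounded (ball x R)) :
    lowerTD x ≤ lowerLocalBoxDim x := by
  refine EReal.ge_of_forall_gt_iff_ge.1 fun t' ht' => ?_
  obtain ⟨t, ht't, ht⟩ := EReal.lt_iff_exists_real_btwn.1 ht'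
  exact le_lowerLocalBoxDim_of_lt_lowerTD hhom hc ha hTB ht (EReal.coe_lt_coe_iff.1 ht't)

theorem upperLocalBoxDim_le_upperTD (hhom : HomogeneousAt x c a) (hc : 1 ≤ c) (ha : 0 < a)
    (hTB : ∀ᶠ R in 𝓝[>] (0 : ℝ), TotallyBounded (ball x R)) :
    upperLocalBoxDim x ≤ upperTD x := by
  refine EReal.le_of_forall_lt_iff_le.1 fun t' ht' => ?_
  obtain ⟨t, ht, htt'⟩ := EReal.lt_iff_exists_real_btwn.1 ht'
  exact upperLocalBoxDim_le_of_upperTD_lt hhom hc ha hTB ht (EReal.coe_lt_coe_iff.1 htt')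

theorem lowerLocalBoxDim_le_upperLocalBoxDim (x : X) : lowerLocalBoxDim x ≤ upperLocalBoxDim x :=
  (liminf_le_liminf (Eventually.of_forall fun _ => liminf_le_limsup) (by isBoundedDefault)
    (by isBoundedDefault)).trans liminf_le_limsup

end Dimensions

theorem stmt19_general {X : Type*} [MetricSpace X] (x : X)
    -- condition: `limsup_{r→0} n(λ r, B̄(x,r)) < ∞` for all `λ > 0`
    (hfin : ∀ l > (0 : ℝ), ∃ C : ℕ, ∀ᶠ r in 𝓝[>] (0 : ℝ),
      ∃ F : Finset X, F.card ≤ C ∧ closedBall x r ⊆ ⋃ y ∈ F, ball y (l * r))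
    -- doubling-type homogeneity assumption
    (c : ℝ) (hc : 1 ≤ c) (a : ℝ) (ha : 0 < a)
    (hhom : ∀ r : ℝ, 0 < r → r ≤ a → ∀ l m : ℝ, 0 < l → l ≤ 1 → 0 < m → m ≤ 1 →
      ∀ y ∈ ball x r, ∀ z ∈ ball x r,
        (coverNum (l * m * r) (ball y (l * r)) : ℝ) ≤
          c * (coverNum (l * m * r) (ball z (l * r)) : ℝ)) :
    lowerTD x ≤ lowerLocalBoxDim x ∧
      lowerLocalBoxDim x ≤ upperLocalBoxDim x ∧
        upperLocalBoxDim x ≤ upperTD x := by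
  have hTB := HomogeneousAt.eventually_totallyBounded_ball hhom (by linarith) ha (ν := 1 / 4)
    (by norm_num) (by norm_num) (hfin (1 / 4) (by norm_num))
  exact ⟨lowerTD_le_lowerLocalBoxDim hhom (by linarith) ha hTB,
    lowerLocalBoxDim_le_upperLocalBoxDim x, upperLocalBoxDim_le_upperTD hhom hc ha hTB⟩

theorem stmt19 {X : Type*} [MetricSpace X] (x : X)
    -- condition: `limsup_{r→0} n(λ r, B̄(x,r)) < ∞` for all `λ > 0`
    (hfin : ∀ l > (0 : ℝ), ∃ C : ℕ, ∀ᶠ r in 𝓝[>] (0 : ℝ),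
      ∃ F : Finset X, F.card ≤ C ∧ closedBall x r ⊆ ⋃ y ∈ F, ball y (l * r))
    -- doubling-type homogeneity assumption
    (c : ℝ) (hc : 1 ≤ c) (a : ℝ) (ha : 0 < a) (ha1 : a ≤ 1)
    (hhom : ∀ r : ℝ, 0 < r → r ≤ a → ∀ l m : ℝ, 0 < l → l ≤ 1 → 0 < m → m ≤ 1 →
      ∀ y ∈ ball x r, ∀ z ∈ ball x r,
        (coverNum (l * m * r) (ball y (l * r)) : ℝ) ≤
          c * (coverNum (l * m * r) (ball z (l * r)) : ℝ)) :
    lowerTD x ≤ lowerLocalBoxDim x ∧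
      lowerLocalBoxDim x ≤ upperLocalBoxDim x ∧
        upperLocalBoxDim x ≤ upperTD x :=
  stmt19_general x hfin c hc a ha hhom
end
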